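/- arXiv:2212.02933 — 6 statements merged into one kernel-verified Lean document; each statement's English description precedes it below -/
import Mathlib

section
/- Let P and Q be nonempty compact convex sets in a real Hilbert space with metric projections Π_P and Π_Q. Starting from y₀, define the alternating projection iterates x_{t+1} = Π_P(y_t) and y_{t+1} = Π_Q(x_{t+1}) for t ≥ 0. Let Q_min be the set of points of Q at minimal distance to P and let d be the distance vector between P and Q, i.e., d = z − Π_P(z) for all z ∈ Q_min. Then for every T ≥ 1, (1/T) · Σ_{t=0}^{T−1} ( ‖y_t − x_{t+1} − d‖² + ‖x_{t+1} − y_{t+1} + d‖² ) ≤ dist(y₀, Q_min)² / T. -/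
/-!
Fix `z ∈ Qmin` with `p = Π_P z`, so `d = z - p`. The variational inequalities of the two
projections at `z` and `p` (`z` is also a nearest point of `Q` to `p`) say that `d` separates:
`⟪d, w - p⟫ ≤ 0` on `P` and `⟪d, q - z⟫ ≥ 0` on `Q`. Splitting
`y_t - z = (y_t - x_{t+1} - d) + (x_{t+1} - y_{t+1} + d) + (y_{t+1} - z)` and combining these
with the variational inequalities at `x_{t+1}` and `y_{t+1}` shows all cross terms are
nonnegative, so `‖y_{t+1} - z‖²` plus the two residuals is at most `‖y_t - z‖²`.
Telescoping bounds the sum of residuals by `‖y₀ - z‖²`; take the infimum over `z ∈ Qmin`.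
-/

open RealInnerProductSpace Metric Finset

theorem sq_le_sq_infDist {α : Type*} [PseudoMetricSpace α] {s : Set α} (hs : s.Nonempty)
    {x : α} {r : ℝ} (hr : ∀ z ∈ s, r ≤ dist x z ^ 2) : r ≤ infDist x s ^ 2 := by
  by_contra! hlt
  obtain ⟨z, hz, hdist⟩ :=
    (infDist_lt_iff hs).1 ((Real.lt_sqrt infDist_nonneg).2 hlt)
  exact (hr z hz).not_gt ((Real.lt_sqrt dist_nonneg).1 hdist)

theorem norm_sub_le_of_infDist_le {E : Type*} [SeminormedAddCommGroup E] {P Q : Set E}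
    {z p : E} (hzmin : ∀ w ∈ Q, infDist z P ≤ infDist w P) (hp : p ∈ P)
    (hpmin : ∀ w ∈ P, ‖z - p‖ ≤ ‖z - w‖) {q : E} (hq : q ∈ Q) : ‖p - z‖ ≤ ‖p - q‖ := by
  have hzp : ‖z - p‖ ≤ infDist z P :=
    (le_infDist ⟨p, hp⟩).2 fun w hw => (hpmin w hw).trans_eq (dist_eq_norm z w).symm
  calc ‖p - z‖ = ‖z - p‖ := norm_sub_rev p z
    _ ≤ infDist q P := hzp.trans (hzmin q hq)
    _ ≤ ‖q - p‖ := (infDist_le_dist_of_mem hp).trans_eq (dist_eq_norm q p)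
    _ = ‖p - q‖ := norm_sub_rev q p

section AlternatingProjections

variable {H : Type*} [NormedAddCommGroup H] [InnerProductSpace ℝ H]

theorem real_inner_sub_le_zero_of_forall_norm_sub_le {K : Set H} (hK : Convex ℝ K) {z p : H}
    (hp : p ∈ K) (hmin : ∀ w ∈ K, ‖z - p‖ ≤ ‖z - w‖) {w : H} (hw : w ∈ K) :
    ⟪z - p, w - p⟫ ≤ 0 := by
  have : Nonempty K := ⟨⟨p, hp⟩⟩
  have hbdd : BddBelow (Set.range fun w : K => ‖z - w‖) :=
    ⟨0, by rintro _ ⟨w, rfl⟩; exact norm_nonneg _⟩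
  have hinf : ‖z - p‖ = ⨅ w : K, ‖z - w‖ :=
    le_antisymm (le_ciInf fun w => hmin w w.2) (ciInf_le hbdd ⟨p, hp⟩)
  exact (norm_eq_iInf_iff_real_inner_le_zero hK hp).mp hinf w hw

theorem real_inner_sub_nonneg_of_infDist_le {P Q : Set H} (hQ : Convex ℝ Q) {z p : H}
    (hz : z ∈ Q) (hzmin : ∀ w ∈ Q, infDist z P ≤ infDist w P) (hp : p ∈ P)
    (hpmin : ∀ w ∈ P, ‖z - p‖ ≤ ‖z - w‖) {q : H} (hq : q ∈ Q) : 0 ≤ ⟪z - p, q - z⟫ := by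
  have := real_inner_sub_le_zero_of_forall_norm_sub_le hQ hz
    (fun w hw => norm_sub_le_of_infDist_le hzmin hp hpmin hw) hq
  rw [← neg_sub p z, inner_neg_left]
  linarith

theorem norm_sq_add_residuals_le {y a b z p d : H} (hd : d = z - p)
    (hya : ⟪y - a, p - a⟫ ≤ 0) (hab : ⟪a - b, z - b⟫ ≤ 0)
    (hdP : ⟪d, a - p⟫ ≤ 0) (hdQ : 0 ≤ ⟪d, b - z⟫) :
    ‖b - z‖ ^ 2 + (‖y - a - d‖ ^ 2 + ‖a - b + d‖ ^ 2) ≤ ‖y - z‖ ^ 2 := by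
  have hsplit : y - z = (y - a - d) + (a - p) := by rw [hd]; abel
  have hvw : a - p = (a - b + d) + (b - z) := by rw [hd]; abel
  have huv : ⟪y - a - d, a - p⟫ = -⟪y - a, p - a⟫ - ⟪d, a - p⟫ := by
    rw [inner_sub_left, ← neg_sub p a, inner_neg_right]
  have hvb : ⟪a - b + d, b - z⟫ = -⟪a - b, z - b⟫ + ⟪d, b - z⟫ := by
    rw [inner_add_left, ← neg_sub z b, inner_neg_right]
  have h₁ := norm_add_sq_real (y - a - d) (a - p)
  have h₂ := norm_add_sq_real (a - b + d) (b - z)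
  rw [← hsplit] at h₁
  rw [← hvw] at h₂
  linarith

theorem sum_residuals_add_norm_sq_le {P Q : Set H} (hP : Convex ℝ P) (hQ : Convex ℝ Q)
    {projP projQ : H → H}
    (hprojP : ∀ z : H, projP z ∈ P ∧ ∀ w ∈ P, ‖z - projP z‖ ≤ ‖z - w‖)
    (hprojQ : ∀ z : H, projQ z ∈ Q ∧ ∀ w ∈ Q, ‖z - projQ z‖ ≤ ‖z - w‖)
    {x y : ℕ → H} (hx : ∀ t : ℕ, x (t + 1) = projP (y t))
    (hy : ∀ t : ℕ, y (t + 1) = projQ (x (t + 1)))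
    {z p d : H} (hz : z ∈ Q) (hp : p ∈ P) (hd : d = z - p)
    (hdP : ∀ w ∈ P, ⟪d, w - p⟫ ≤ 0) (hdQ : ∀ q ∈ Q, 0 ≤ ⟪d, q - z⟫) (T : ℕ) :
    ∑ t ∈ range T, (‖y t - x (t + 1) - d‖ ^ 2 + ‖x (t + 1) - y (t + 1) + d‖ ^ 2)
      + ‖y T - z‖ ^ 2 ≤ ‖y 0 - z‖ ^ 2 := by
  induction T with
  | zero => simp
  | succ t ih =>
    have hxP : x (t + 1) ∈ P := hx t ▸ (hprojP (y t)).1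
    have hyQ : y (t + 1) ∈ Q := hy t ▸ (hprojQ (x (t + 1))).1
    have hstep := norm_sq_add_residuals_le hd
      (real_inner_sub_le_zero_of_forall_norm_sub_le hP hxP (hx t ▸ (hprojP (y t)).2) hp)
      (real_inner_sub_le_zero_of_forall_norm_sub_le hQ hyQ (hy t ▸ (hprojQ _).2) hz)
      (hdP _ hxP) (hdQ _ hyQ)
    rw [sum_range_succ]
    linarith

end AlternatingProjections

theorem alternating_projections_rate_general
    {H : Type*} [NormedAddCommGroup H] [InnerProductSpace ℝ H]
    (P Q : Set H)
    (hQcpt : IsCompact Q)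
    (hPconv : Convex ℝ P) (hQconv : Convex ℝ Q)
    (projP projQ : H → H)
    (hprojP : ∀ z : H, projP z ∈ P ∧ ∀ w ∈ P, ‖z - projP z‖ ≤ ‖z - w‖)
    (hprojQ : ∀ z : H, projQ z ∈ Q ∧ ∀ w ∈ Q, ‖z - projQ z‖ ≤ ‖z - w‖)
    (y₀ : H) (x y : ℕ → H) (hy0 : y 0 = y₀)
    (hx : ∀ t : ℕ, x (t + 1) = projP (y t))
    (hy : ∀ t : ℕ, y (t + 1) = projQ (x (t + 1)))
    (Qmin : Set H)
    (hQmin : Qmin = {z ∈ Q | ∀ w ∈ Q, infDist z P ≤ infDist w P})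
    (d : H) (hd : ∀ z ∈ Qmin, d = z - projP z) :
    ∀ T : ℕ, 1 ≤ T →
      (1 / (T : ℝ)) * ∑ t ∈ Finset.range T,
          (‖y t - x (t + 1) - d‖ ^ 2 + ‖x (t + 1) - y (t + 1) + d‖ ^ 2)
        ≤ (infDist y₀ Qmin) ^ 2 / (T : ℝ) := by
  intro T _
  have hQmin_ne : Qmin.Nonempty := by
    obtain ⟨z, hz, hzmin⟩ := hQcpt.exists_isMinOn ⟨projQ y₀, (hprojQ y₀).1⟩
      (continuous_infDist_pt P).continuousOn
    exact ⟨z, hQmin ▸ ⟨hz, fun w hw => hzmin hw⟩⟩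
  have hsum : ∑ t ∈ range T, (‖y t - x (t + 1) - d‖ ^ 2 + ‖x (t + 1) - y (t + 1) + d‖ ^ 2)
      ≤ infDist y₀ Qmin ^ 2 := by
    refine sq_le_sq_infDist hQmin_ne fun z hzQmin => ?_
    have hdz := hd z hzQmin
    rw [hQmin] at hzQmin
    obtain ⟨hz, hzmin⟩ := hzQmin
    obtain ⟨hp, hpmin⟩ := hprojP z
    have hbound := sum_residuals_add_norm_sq_le hPconv hQconv hprojP hprojQ hx hy hz hp hdz
      (fun w hw => hdz ▸ real_inner_sub_le_zero_of_forall_norm_sub_le hPconv hp hpmin hw)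
      (fun q hq => hdz ▸ real_inner_sub_nonneg_of_infDist_le hQconv hz hzmin hp hpmin hq) T
    rw [hy0, ← dist_eq_norm y₀ z] at hbound
    linarith [sq_nonneg ‖y T - z‖]
  rw [one_div_mul_eq_div]
  gcongr

/-- **Convergence rate of von Neumann's alternating projections** (general form).
With `Qmin` the set of points of `Q` of minimal distance to `P` and `d` the distance
vector (`d = z − Π_P z` for all `z ∈ Qmin`), the averaged residuals of the alternating
projection iterates started at `y₀` are bounded by `dist(y₀, Qmin)² / T`. -/
theorem alternating_projections_rate
    {H : Type*} [NormedAddCommGroup H] [InnerProductSpace ℝ H] [CompleteSpace H]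
    (P Q : Set H) (hPne : P.Nonempty) (hQne : Q.Nonempty)
    (hPcpt : IsCompact P) (hQcpt : IsCompact Q)
    (hPconv : Convex ℝ P) (hQconv : Convex ℝ Q)
    (projP projQ : H → H)
    (hprojP : ∀ z : H, projP z ∈ P ∧ ∀ w ∈ P, ‖z - projP z‖ ≤ ‖z - w‖)
    (hprojQ : ∀ z : H, projQ z ∈ Q ∧ ∀ w ∈ Q, ‖z - projQ z‖ ≤ ‖z - w‖)
    (y₀ : H) (x y : ℕ → H) (hy0 : y 0 = y₀)
    (hx : ∀ t : ℕ, x (t + 1) = projP (y t))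
    (hy : ∀ t : ℕ, y (t + 1) = projQ (x (t + 1)))
    (Qmin : Set H)
    (hQmin : Qmin = {z ∈ Q | ∀ w ∈ Q, infDist z P ≤ infDist w P})
    (d : H) (hd : ∀ z ∈ Qmin, d = z - projP z) :
    ∀ T : ℕ, 1 ≤ T →
      (1 / (T : ℝ)) * ∑ t ∈ Finset.range T,
          (‖y t - x (t + 1) - d‖ ^ 2 + ‖x (t + 1) - y (t + 1) + d‖ ^ 2)
        ≤ (infDist y₀ Qmin) ^ 2 / (T : ℝ) :=
  alternating_projections_rate_general P Q hQcpt hPconv hQconv projP projQ hprojP hprojQ y₀ x y hy0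
    hx hy Qmin hQmin d hd
end

section
/- Let P and Q be nonempty compact convex sets in a real Hilbert space with P ∩ Q ≠ ∅, and with metric projections Π_P and Π_Q. Starting from y₀, define the alternating projection iterates x_{t+1} = Π_P(y_t) and y_{t+1} = Π_Q(x_{t+1}) for t ≥ 0. Then for every T ≥ 1, ‖x_T − y_T‖² ≤ (1/T) · Σ_{t=0}^{T−1} ( ‖y_t − x_{t+1}‖² + ‖x_{t+1} − y_{t+1}‖² ) ≤ dist(y₀, P ∩ Q)² / T. -/
/-! Both inequalities come from the obtuse-angle characterisation of the projection onto a
convex set `K`: if `p` is nearest to `u` in `K`, then `‖u - p‖² + ‖p - z‖² ≤ ‖u - z‖²` for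
every `z ∈ K`. Applied twice per round with `z ∈ P ∩ Q`, it shows that `‖y t - z‖²` drops by
at least the `t`-th summand, so the sum telescopes to at most `‖y₀ - z‖²`. The gap
`‖x t - y t‖` is nonincreasing, since each projection moves a point no farther from the other
set than its previous partner, so the last gap is below the average of the summands. -/

open RealInnerProductSpace Metric

section AlternatingProjections

variable {H : Type*} [NormedAddCommGroup H]

def IsNearestPoint (K : Set H) (u p : H) : Prop :=
  p ∈ K ∧ ∀ w ∈ K, ‖u - p‖ ≤ ‖u - w‖

theorem IsNearestPoint.norm_eq_iInf {K : Set H} {u p : H} (h : IsNearestPoint K u p) :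
    ‖u - p‖ = ⨅ w : K, ‖u - w‖ :=
  have : Nonempty K := ⟨⟨p, h.1⟩⟩
  le_antisymm (le_ciInf fun w => h.2 w w.2)
    (ciInf_le ⟨0, Set.forall_mem_range.2 fun _ => norm_nonneg _⟩ (⟨p, h.1⟩ : K))

theorem norm_sub_le_of_isNearestPoint_of_isNearestPoint {P Q : Set H} {p q p' q' : H}
    (hp : p ∈ P) (hq : q ∈ Q) (hp' : IsNearestPoint P q p') (hq' : IsNearestPoint Q p' q') :
    ‖p' - q'‖ ≤ ‖p - q‖ :=
  calc ‖p' - q'‖ ≤ ‖p' - q‖ := hq'.2 q hq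
    _ = ‖q - p'‖ := norm_sub_rev _ _
    _ ≤ ‖q - p‖ := hp'.2 p hp
    _ = ‖p - q‖ := norm_sub_rev _ _

def IsAlternatingProjection (P Q : Set H) (x y : ℕ → H) : Prop :=
  ∀ t, IsNearestPoint P (y t) (x (t + 1)) ∧ IsNearestPoint Q (x (t + 1)) (y (t + 1))

namespace IsAlternatingProjection

variable {P Q : Set H} {x y : ℕ → H}

theorem antitone_norm_sub (h : IsAlternatingProjection P Q x y) :
    Antitone fun t => ‖x (t + 1) - y (t + 1)‖ :=
  antitone_nat_of_succ_le fun t =>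
    norm_sub_le_of_isNearestPoint_of_isNearestPoint (h t).1.1 (h t).2.1
      (h (t + 1)).1 (h (t + 1)).2

theorem sq_norm_sub_le_average (h : IsAlternatingProjection P Q x y) {T : ℕ} (hT : 1 ≤ T) :
    ‖x T - y T‖ ^ 2 ≤ (1 / (T : ℝ)) * ∑ t ∈ Finset.range T,
      (‖y t - x (t + 1)‖ ^ 2 + ‖x (t + 1) - y (t + 1)‖ ^ 2) := by
  have hlast : ∀ t ∈ Finset.range T,
      ‖x T - y T‖ ^ 2 ≤ ‖y t - x (t + 1)‖ ^ 2 + ‖x (t + 1) - y (t + 1)‖ ^ 2 := by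
    intro t ht
    obtain ⟨k, rfl⟩ := Nat.exists_eq_add_of_le' hT
    have hgap := h.antitone_norm_sub (Nat.le_of_lt_succ (Finset.mem_range.mp ht))
    exact (pow_le_pow_left₀ (norm_nonneg _) hgap 2).trans (le_add_of_nonneg_left (sq_nonneg _))
  have hsum := Finset.card_nsmul_le_sum _ _ _ hlast
  rw [Finset.card_range, nsmul_eq_mul] at hsum
  rw [one_div_mul_eq_div, le_div_iff₀ (by exact_mod_cast hT)]
  linarith

end IsAlternatingProjection

variable [InnerProductSpace ℝ H]

theorem IsNearestPoint.sq_norm_sub_add_sq_norm_sub_le {K : Set H} {u p z : H}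
    (hK : Convex ℝ K) (h : IsNearestPoint K u p) (hz : z ∈ K) :
    ‖u - p‖ ^ 2 + ‖p - z‖ ^ 2 ≤ ‖u - z‖ ^ 2 := by
  have hobtuse : ⟪u - p, z - p⟫ ≤ 0 :=
    (norm_eq_iInf_iff_real_inner_le_zero hK h.1).mp h.norm_eq_iInf z hz
  have hsplit : ‖u - z‖ ^ 2 = ‖u - p‖ ^ 2 + 2 * ⟪u - p, p - z⟫ + ‖p - z‖ ^ 2 := by
    rw [← norm_add_sq_real, sub_add_sub_cancel]
  have hcross : ⟪u - p, p - z⟫ = -⟪u - p, z - p⟫ := by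
    rw [← inner_neg_right, neg_sub]
  linarith

namespace IsAlternatingProjection

variable {P Q : Set H} {x y : ℕ → H}

theorem sum_le_sq_norm_sub (h : IsAlternatingProjection P Q x y) (hP : Convex ℝ P)
    (hQ : Convex ℝ Q) {z : H} (hz : z ∈ P ∩ Q) (T : ℕ) :
    ∑ t ∈ Finset.range T, (‖y t - x (t + 1)‖ ^ 2 + ‖x (t + 1) - y (t + 1)‖ ^ 2)
      ≤ ‖y 0 - z‖ ^ 2 := by
  have hstep : ∀ t ∈ Finset.range T, ‖y t - x (t + 1)‖ ^ 2 + ‖x (t + 1) - y (t + 1)‖ ^ 2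
      ≤ ‖y t - z‖ ^ 2 - ‖y (t + 1) - z‖ ^ 2 := by
    intro t _
    have hP := (h t).1.sq_norm_sub_add_sq_norm_sub_le hP hz.1
    have hQ := (h t).2.sq_norm_sub_add_sq_norm_sub_le hQ hz.2
    linarith
  calc _ ≤ ∑ t ∈ Finset.range T, (‖y t - z‖ ^ 2 - ‖y (t + 1) - z‖ ^ 2) :=
        Finset.sum_le_sum hstep
    _ = ‖y 0 - z‖ ^ 2 - ‖y T - z‖ ^ 2 := Finset.sum_range_sub' _ _
    _ ≤ ‖y 0 - z‖ ^ 2 := sub_le_self _ (sq_nonneg _)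

theorem sum_le_sq_infDist (h : IsAlternatingProjection P Q x y) (hP : Convex ℝ P)
    (hQ : Convex ℝ Q) (hPQ : (P ∩ Q).Nonempty) (T : ℕ) :
    ∑ t ∈ Finset.range T, (‖y t - x (t + 1)‖ ^ 2 + ‖x (t + 1) - y (t + 1)‖ ^ 2)
      ≤ infDist (y 0) (P ∩ Q) ^ 2 := by
  set S := ∑ t ∈ Finset.range T, (‖y t - x (t + 1)‖ ^ 2 + ‖x (t + 1) - y (t + 1)‖ ^ 2)
  have hS : 0 ≤ S := Finset.sum_nonneg fun _ _ => by positivity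
  have hsqrt : √S ≤ infDist (y 0) (P ∩ Q) := by
    refine (le_infDist hPQ).mpr fun z hz => ?_
    rw [dist_eq_norm, ← Real.sqrt_sq (norm_nonneg _)]
    exact Real.sqrt_le_sqrt (h.sum_le_sq_norm_sub hP hQ hz T)
  calc S = √S ^ 2 := (Real.sq_sqrt hS).symm
    _ ≤ _ := pow_le_pow_left₀ (Real.sqrt_nonneg S) hsqrt 2

end IsAlternatingProjection

end AlternatingProjections

theorem alternating_projections_rate_intersecting_general
    {H : Type*} [NormedAddCommGroup H] [InnerProductSpace ℝ H]
    (P Q : Set H)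
    (hPconv : Convex ℝ P) (hQconv : Convex ℝ Q)
    (hPQ : (P ∩ Q).Nonempty)
    (projP projQ : H → H)
    (hprojP : ∀ z : H, projP z ∈ P ∧ ∀ w ∈ P, ‖z - projP z‖ ≤ ‖z - w‖)
    (hprojQ : ∀ z : H, projQ z ∈ Q ∧ ∀ w ∈ Q, ‖z - projQ z‖ ≤ ‖z - w‖)
    (y₀ : H) (x y : ℕ → H) (hy0 : y 0 = y₀)
    (hx : ∀ t : ℕ, x (t + 1) = projP (y t))
    (hy : ∀ t : ℕ, y (t + 1) = projQ (x (t + 1))) :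
    ∀ T : ℕ, 1 ≤ T →
      ‖x T - y T‖ ^ 2 ≤
        (1 / (T : ℝ)) * ∑ t ∈ Finset.range T,
          (‖y t - x (t + 1)‖ ^ 2 + ‖x (t + 1) - y (t + 1)‖ ^ 2) ∧
      (1 / (T : ℝ)) * ∑ t ∈ Finset.range T,
          (‖y t - x (t + 1)‖ ^ 2 + ‖x (t + 1) - y (t + 1)‖ ^ 2)
        ≤ (infDist y₀ (P ∩ Q)) ^ 2 / (T : ℝ) := by
  have halt : IsAlternatingProjection P Q x y := fun t => by
    rw [hy t, hx t]
    exact ⟨hprojP (y t), hprojQ (projP (y t))⟩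
  intro T hT
  refine ⟨halt.sq_norm_sub_le_average hT, ?_⟩
  rw [one_div_mul_eq_div, ← hy0]
  gcongr
  exact halt.sum_le_sq_infDist hPconv hQconv hPQ T

/-- **Convergence rate of von Neumann's alternating projections** in the intersecting
case: `‖x_T − y_T‖² ≤ (1/T)·Σ_{t<T}(‖y_t − x_{t+1}‖² + ‖x_{t+1} − y_{t+1}‖²)
≤ dist(y₀, P ∩ Q)²/T`. -/
theorem alternating_projections_rate_intersecting
    {H : Type*} [NormedAddCommGroup H] [InnerProductSpace ℝ H] [CompleteSpace H]
    (P Q : Set H) (hPne : P.Nonempty) (hQne : Q.Nonempty)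
    (hPcpt : IsCompact P) (hQcpt : IsCompact Q)
    (hPconv : Convex ℝ P) (hQconv : Convex ℝ Q)
    (hPQ : (P ∩ Q).Nonempty)
    (projP projQ : H → H)
    (hprojP : ∀ z : H, projP z ∈ P ∧ ∀ w ∈ P, ‖z - projP z‖ ≤ ‖z - w‖)
    (hprojQ : ∀ z : H, projQ z ∈ Q ∧ ∀ w ∈ Q, ‖z - projQ z‖ ≤ ‖z - w‖)
    (y₀ : H) (x y : ℕ → H) (hy0 : y 0 = y₀)
    (hx : ∀ t : ℕ, x (t + 1) = projP (y t))
    (hy : ∀ t : ℕ, y (t + 1) = projQ (x (t + 1))) :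
    ∀ T : ℕ, 1 ≤ T →
      ‖x T - y T‖ ^ 2 ≤
        (1 / (T : ℝ)) * ∑ t ∈ Finset.range T,
          (‖y t - x (t + 1)‖ ^ 2 + ‖x (t + 1) - y (t + 1)‖ ^ 2) ∧
      (1 / (T : ℝ)) * ∑ t ∈ Finset.range T,
          (‖y t - x (t + 1)‖ ^ 2 + ‖x (t + 1) - y (t + 1)‖ ^ 2)
        ≤ (infDist y₀ (P ∩ Q)) ^ 2 / (T : ℝ) :=
  alternating_projections_rate_intersecting_general P Q hPconv hQconv hPQ projP projQ hprojP hprojQ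
    y₀ x y hy0 hx hy
end

section
/- Let k ≥ 1 and let P₀, …, P_{k−1} be nonempty compact convex sets, P_i in a real inner product space E_i, with diameters D₀, …, D_{k−1}, and let D = √(Σ_i D_i²). Let f be a convex function on the product that is L-smooth on the product, partially L_i-smooth (with L_i > 0) and partially G_i-Lipschitz in each block P_i. Consider the cyclic block-coordinate conditional gradient iterates with the short-step rule: at iteration t set i = t mod k, choose v^t ∈ P_i minimizing ⟨∇_{P_i} f(x^t), x⟩ over P_i, set γ_t = min{ ⟨∇_{P_i} f(x^t), x^t_i − v^t⟩ / (L_i ‖x^t_i − v^t‖²), 1 }, and update x^{t+1}_i = x^t_i + γ_t (v^t − x^t_i), other blocks unchanged. Then for every t ≥ 0, f(x^{kt}) − f(x*) ≤ (4k/(t + 4)) · ( max_{0 ≤ i ≤ k−1} max{L_i D_i², G_i D_i} + k L² D² / min_{0 ≤ i ≤ k−1} L_i ), where x* is a minimizer of f over the product. -/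
/-!
Write `C = maxᵢ max (Lᵢ Dᵢ², Gᵢ Dᵢ)` and `h_t = f(x^{kt}) - f(x*)`. By the descent lemma for the
partially smooth block, a short step on block `i` decreases `f` by at least `gap² / (2C)` and by at
least `L_min ‖x^{t+1} - x^t‖² / 2`, where `gap = ⟨∇ᵢ f(x^t), x^t_i - v^t⟩` is the block
Frank–Wolfe gap. In the epoch from `x^{kt}` to `x^{k(t+1)}`, block `l` is untouched before step
`l`, so convexity bounds `h_t ≤ ⟨∇f(x^{kt}), x^{kt} - x*⟩` by the sum of the epoch's gaps plus
`L · (length of the epoch's path) · Σᵢ Dᵢ`, the last term paying, by `L`-smoothness, for the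
gradient having moved by step `l`. Cauchy–Schwarz turns both terms into the decrease of `f` over
the epoch: `h_t² ≤ 4k (C + k L² D² / L_min) (h_t - h_{t+1})`. Together with `h_0 ≤ k C` this
recursion gives the `O(1/t)` rate by induction.
-/

open RealInnerProductSpace

instance piLpCompleteSpace {k : ℕ} (p : ENNReal) {E : Fin k → Type*}
    [∀ i, NormedAddCommGroup (E i)] [∀ i, CompleteSpace (E i)] :
    CompleteSpace (PiLp p E) :=
  inferInstance

open Finset

section Calculus

variable {F : Type*} [NormedAddCommGroup F] [InnerProductSpace ℝ F]

theorem real_inner_le_mul_of_norm_le {a b : F} {G D : ℝ} (ha : ‖a‖ ≤ G) (hb : ‖b‖ ≤ D) :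
    ⟪a, b⟫ ≤ G * D :=
  (real_inner_le_norm a b).trans (mul_le_mul ha hb (norm_nonneg b) ((norm_nonneg a).trans ha))

variable [CompleteSpace F]

theorem HasGradientAt.hasDerivAt_add_smul {f : F → ℝ} {f' z e : F} {τ : ℝ}
    (h : HasGradientAt f f' (z + τ • e)) :
    HasDerivAt (fun s : ℝ => f (z + s • e)) ⟪f', e⟫ τ := by
  have hline : HasDerivAt (fun s : ℝ => z + s • e) e τ := by
    simpa using ((hasDerivAt_id τ).smul_const e).const_add z
  have := h.hasFDerivAt.comp_hasDerivAt τ hline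
  simp only [InnerProductSpace.toDual_apply_apply] at this
  exact this

theorem le_add_add_half_of_hasDerivAt_le {φ φ' : ℝ → ℝ} {a M : ℝ}
    (hφ : ∀ τ ∈ Set.Icc (0 : ℝ) 1, HasDerivAt φ (φ' τ) τ)
    (hbound : ∀ τ ∈ Set.Icc (0 : ℝ) 1, φ' τ ≤ a + M * τ) :
    φ 1 ≤ φ 0 + a + M / 2 := by
  set ψ : ℝ → ℝ := fun τ => φ τ - a * τ - M * τ ^ 2 / 2
  have hψ : ∀ τ ∈ Set.Icc (0 : ℝ) 1, HasDerivAt ψ (φ' τ - (a + M * τ)) τ := by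
    intro τ hτ
    have hq : HasDerivAt (fun τ : ℝ => M * τ ^ 2 / 2) (M * τ) τ := by
      simpa using (((hasDerivAt_pow 2 τ).const_mul M).div_const 2).congr_deriv (by ring)
    exact (((hφ τ hτ).sub ((hasDerivAt_id τ).const_mul a)).sub hq).congr_deriv (by simp; ring)
  have hanti : AntitoneOn ψ (Set.Icc 0 1) := by
    refine antitoneOn_of_deriv_nonpos (convex_Icc 0 1)
      (fun τ hτ => (hψ τ hτ).continuousAt.continuousWithinAt)
      (fun τ hτ => (hψ τ (interior_subset hτ)).differentiableAt.differentiableWithinAt)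
      fun τ hτ => ?_
    rw [(hψ τ (interior_subset hτ)).deriv]
    linarith [hbound τ (interior_subset hτ)]
  have := hanti (Set.left_mem_Icc.2 zero_le_one) (Set.right_mem_Icc.2 zero_le_one) zero_le_one
  simp only [ψ] at this
  linarith

theorem ConvexOn.sub_le_inner_gradient {S : Set F} {f : F → ℝ} {f' x y : F}
    (hf : ConvexOn ℝ S f) (hgrad : HasGradientAt f f' x) (hx : x ∈ S) (hy : y ∈ S) :
    f x - f y ≤ ⟪f', x - y⟫ := by
  have hline : ConvexOn ℝ (Set.Icc 0 1) (fun τ : ℝ => f (x + τ • (y - x))) := by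
    have hmaps : Set.Icc (0 : ℝ) 1 ⊆ AffineMap.lineMap x y ⁻¹' S := fun τ hτ =>
      hf.1.lineMap_mem hx hy hτ
    have hcomp : f ∘ AffineMap.lineMap x y = fun τ : ℝ => f (x + τ • (y - x)) := by
      ext τ
      simp [AffineMap.lineMap_apply_module', add_comm]
    exact hcomp ▸ (hf.comp_affineMap _).subset hmaps (convex_Icc 0 1)
  have hslope := hline.le_slope_of_hasDerivAt (Set.left_mem_Icc.2 zero_le_one)
    (Set.right_mem_Icc.2 zero_le_one) zero_lt_one
    (HasGradientAt.hasDerivAt_add_smul (τ := 0) (by simpa using hgrad))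
  rw [← neg_sub y x, inner_neg_right]
  simp only [slope_def_field, one_smul, add_sub_cancel, zero_smul, add_zero, sub_zero, div_one]
    at hslope
  linarith

theorem apply_add_le_of_inner_sub_le {f : F → ℝ} {g : F → F} {x e : F} {M : ℝ}
    (hgrad : ∀ τ ∈ Set.Icc (0 : ℝ) 1, HasGradientAt f (g (x + τ • e)) (x + τ • e))
    (hbound : ∀ τ ∈ Set.Icc (0 : ℝ) 1, ⟪g (x + τ • e) - g x, e⟫ ≤ M * τ) :
    f (x + e) ≤ f x + ⟪g x, e⟫ + M / 2 := by
  have := le_add_add_half_of_hasDerivAt_le (φ := fun s => f (x + s • e)) (a := ⟪g x, e⟫)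
    (fun τ hτ => (hgrad τ hτ).hasDerivAt_add_smul) fun τ hτ => by
      have := hbound τ hτ
      rw [inner_sub_left] at this
      linarith
  simpa using this

end Calculus

namespace PiLp

variable {ι : Type*} [DecidableEq ι] {E : ι → Type*} [∀ i, NormedAddCommGroup (E i)]

theorem toLp_update_eq_add_single (z : PiLp 2 E) (i : ι) (w : E i) :
    WithLp.toLp 2 (Function.update z i w) = z + single 2 i (w - z i) := by
  ext j
  rcases eq_or_ne j i with rfl | hj
  · simp
  · simp [Function.update_of_ne hj, Pi.single_eq_of_ne hj]

theorem smul_single [∀ i, Module ℝ (E i)] (c : ℝ) (i : ι) (a : E i) :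
    c • single 2 i a = single 2 i (c • a) := by
  ext j
  rcases eq_or_ne j i with rfl | hj
  · simp
  · simp [Pi.single_eq_of_ne hj]

variable [Fintype ι] [∀ i, InnerProductSpace ℝ (E i)]

theorem inner_single_right (z : PiLp 2 E) (i : ι) (a : E i) :
    ⟪z, single 2 i a⟫ = ⟪z i, a⟫ := by
  rw [inner_apply, Finset.sum_eq_single i (fun j _ hj => by simp [Pi.single_eq_of_ne hj])
    (by simp)]
  simp

end PiLp

theorem min_div_one_mem_Icc {G M : ℝ} (hG : 0 ≤ G) (hM : 0 ≤ M) :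
    min (G / M) 1 ∈ Set.Icc (0 : ℝ) 1 :=
  ⟨le_min (div_nonneg hG hM) zero_le_one, min_le_right _ _⟩

theorem short_step_sq_le {G M C δ : ℝ} (hG : 0 ≤ G) (hM : 0 ≤ M) (hGM : M = 0 → G = 0)
    (hGC : G ≤ C) (hMC : M ≤ C) (hδ : min (G / M) 1 * G - M / 2 * min (G / M) 1 ^ 2 ≤ δ) :
    G ^ 2 ≤ 2 * C * δ ∧ M * min (G / M) 1 ^ 2 ≤ 2 * δ := by
  rcases hM.eq_or_lt with hM0 | hMpos
  · obtain rfl := hGM hM0.symm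
    subst hM0
    simp only [div_zero, mul_zero, zero_div, zero_mul, sub_zero] at hδ ⊢
    constructor <;> nlinarith
  rcases le_or_gt (G / M) 1 with hle | hlt
  · rw [min_eq_left hle] at hδ ⊢
    have hq : M * (G / M) ^ 2 = G ^ 2 / M := by field_simp
    have hdec : G / M * G - M / 2 * (G / M) ^ 2 = G ^ 2 / M / 2 := by field_simp; ring
    have hGsq : G ^ 2 = G ^ 2 / M * M := (div_mul_cancel₀ _ hMpos.ne').symm
    have hq0 : 0 ≤ G ^ 2 / M := by positivity
    rw [hq]
    constructor <;> nlinarith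
  · have hMG : M < G := (one_lt_div hMpos).mp hlt
    rw [min_eq_right hlt.le] at hδ ⊢
    constructor <;> nlinarith

section Blocks

variable {ι : Type*} [Fintype ι] [DecidableEq ι] {E : ι → Type*}
  [∀ i, NormedAddCommGroup (E i)] [∀ i, InnerProductSpace ℝ (E i)] [∀ i, CompleteSpace (E i)]
  {f : PiLp 2 E → ℝ} {g : PiLp 2 E → PiLp 2 E} {i : ι} {P : Set (E i)} {K : ℝ}

theorem apply_update_le_of_block_lipschitz (hgrad : ∀ z, HasGradientAt f (g z) z)
    (hP : Convex ℝ P) {z : PiLp 2 E} (hz : z i ∈ P)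
    (hLip : ∀ w ∈ P, ‖g z i - g (WithLp.toLp 2 (Function.update z i w)) i‖ ≤ K * ‖z i - w‖)
    {b : E i} (hb : b ∈ P) :
    f (WithLp.toLp 2 (Function.update z i b)) ≤
      f z + ⟪g z i, b - z i⟫ + K * ‖b - z i‖ ^ 2 / 2 := by
  have hseg : ∀ τ : ℝ, z + τ • PiLp.single 2 i (b - z i) =
      WithLp.toLp 2 (Function.update z i (z i + τ • (b - z i))) := fun τ => by
    rw [PiLp.toLp_update_eq_add_single, PiLp.smul_single, add_sub_cancel_left]
  rw [PiLp.toLp_update_eq_add_single, ← PiLp.inner_single_right]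
  refine apply_add_le_of_inner_sub_le (fun τ _ => hgrad _) fun τ hτ => ?_
  set w := z i + τ • (b - z i)
  rw [PiLp.inner_single_right, hseg, PiLp.sub_apply, ← neg_sub, inner_neg_left]
  calc -⟪g z i - g (WithLp.toLp 2 (Function.update z i w)) i, b - z i⟫
      ≤ ‖g z i - g (WithLp.toLp 2 (Function.update z i w)) i‖ * ‖b - z i‖ :=
        (neg_le_abs _).trans (abs_real_inner_le_norm _ _)
    _ ≤ K * ‖z i - w‖ * ‖b - z i‖ := by
        gcongr
        exact hLip _ (hP.add_smul_sub_mem hz hb hτ)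
    _ = K * ‖b - z i‖ ^ 2 * τ := by
        rw [sub_add_cancel_left, norm_neg, norm_smul, Real.norm_of_nonneg hτ.1]
        ring

theorem block_short_step_sq_le (hgrad : ∀ z, HasGradientAt f (g z) z) (hP : Convex ℝ P)
    (hK : 0 < K) {x : PiLp 2 E} (hx : x i ∈ P)
    (hLip : ∀ w ∈ P, ‖g x i - g (WithLp.toLp 2 (Function.update x i w)) i‖ ≤ K * ‖x i - w‖)
    {v : E i} (hv : v ∈ P) (hvmin : ∀ w ∈ P, ⟪g x i, v⟫ ≤ ⟪g x i, w⟫)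
    {G D C : ℝ} (hgG : ‖g x i‖ ≤ G) (hvD : ‖x i - v‖ ≤ D) (hC : max (K * D ^ 2) (G * D) ≤ C)
    {γ : ℝ} (hγ : γ = min (⟪g x i, x i - v⟫ / (K * ‖x i - v‖ ^ 2)) 1)
    {x' : PiLp 2 E} (hx' : x' = Function.update x i (x i + γ • (v - x i))) :
    ⟪g x i, x i - v⟫ ^ 2 ≤ 2 * C * (f x - f x') ∧ K * ‖x' - x‖ ^ 2 ≤ 2 * (f x - f x') := by
  set gap := ⟪g x i, x i - v⟫
  set M := K * ‖x i - v‖ ^ 2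
  have hgap : 0 ≤ gap := by
    simp only [gap, inner_sub_right]
    linarith [hvmin _ hx]
  have hM : 0 ≤ M := by positivity
  have hgapM : M = 0 → gap = 0 := fun h => by
    have : x i - v = 0 := by simpa [M, hK.ne'] using h
    simp [gap, this]
  have hgapC : gap ≤ C := (real_inner_le_mul_of_norm_le hgG hvD).trans
    ((le_max_right _ _).trans hC)
  have hMC : M ≤ C := (mul_le_mul_of_nonneg_left (pow_le_pow_left₀ (norm_nonneg _) hvD 2)
    hK.le).trans ((le_max_left _ _).trans hC)
  have hγ01 : γ ∈ Set.Icc (0 : ℝ) 1 := hγ ▸ min_div_one_mem_Icc hgap hM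
  have hx'eq : x' = WithLp.toLp 2 (Function.update x i (x i + γ • (v - x i))) := by
    rw [← hx', WithLp.toLp_ofLp]
  have hdesc := apply_update_le_of_block_lipschitz hgrad hP hx hLip
    (hP.add_smul_sub_mem hx hv hγ01)
  rw [← hx'eq, add_sub_cancel_left] at hdesc
  have hmove : ‖x' - x‖ = γ * ‖x i - v‖ := by
    rw [hx'eq, PiLp.toLp_update_eq_add_single, add_sub_cancel_left, add_sub_cancel_left,
      PiLp.norm_single, norm_smul, Real.norm_of_nonneg hγ01.1, norm_sub_rev]
  have hdec : γ * gap - M / 2 * γ ^ 2 ≤ f x - f x' := by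
    have : ⟪g x i, γ • (v - x i)⟫ = -(γ * gap) := by
      rw [inner_smul_right, ← neg_sub, inner_neg_right]; ring
    rw [this, norm_smul, Real.norm_of_nonneg hγ01.1, norm_sub_rev] at hdesc
    linarith
  have hKM : K * (γ * ‖x i - v‖) ^ 2 = M * γ ^ 2 := by ring
  rw [hmove, hKM]
  rw [hγ] at hdec ⊢
  exact short_step_sq_le hgap hM hgapM hgapC hMC hdec

end Blocks

theorem sq_le_of_le_sum_add_mul_sum {n : ℕ} {h K C Lmin D SD : ℝ} {a b δ : ℕ → ℝ}
    (hLmin : 0 < Lmin) (hh : 0 ≤ h)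
    (hle : h ≤ ∑ l ∈ range n, a l + K * (∑ l ∈ range n, b l) * SD)
    (ha : ∀ l ∈ range n, a l ^ 2 ≤ 2 * C * δ l) (hb : ∀ l ∈ range n, Lmin * b l ^ 2 ≤ 2 * δ l)
    (hSD : SD ^ 2 ≤ n * D ^ 2) :
    h ^ 2 ≤ 4 * n * (C + n * K ^ 2 * D ^ 2 / Lmin) * ∑ l ∈ range n, δ l := by
  set A := ∑ l ∈ range n, a l
  set T := ∑ l ∈ range n, b l
  set Δ := ∑ l ∈ range n, δ l
  have hΔ : 0 ≤ Δ := sum_nonneg fun l hl => by nlinarith [hb l hl, sq_nonneg (b l)]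
  have hA : A ^ 2 ≤ n * (2 * C * Δ) :=
    calc A ^ 2 ≤ n * ∑ l ∈ range n, a l ^ 2 := by
          simpa using sq_sum_le_card_mul_sum_sq (s := range n) (f := a)
      _ ≤ n * ∑ l ∈ range n, 2 * C * δ l := by gcongr n * ?_; exact sum_le_sum ha
      _ = n * (2 * C * Δ) := by rw [← mul_sum]
  have hT : Lmin * T ^ 2 ≤ n * (2 * Δ) :=
    calc Lmin * T ^ 2 ≤ Lmin * (n * ∑ l ∈ range n, b l ^ 2) := by
          gcongr
          simpa using sq_sum_le_card_mul_sum_sq (s := range n) (f := b)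
      _ = n * ∑ l ∈ range n, Lmin * b l ^ 2 := by rw [← mul_sum]; ring
      _ ≤ n * ∑ l ∈ range n, 2 * δ l := by gcongr n * ?_; exact sum_le_sum hb
      _ = n * (2 * Δ) := by rw [← mul_sum]
  have hsq : h ^ 2 ≤ 2 * A ^ 2 + 2 * K ^ 2 * SD ^ 2 * T ^ 2 := by
    nlinarith [sq_nonneg (A - K * T * SD)]
  have hKSD : K ^ 2 * SD ^ 2 * (Lmin * T ^ 2) ≤ K ^ 2 * (n * D ^ 2) * (n * (2 * Δ)) := by
    gcongr
  rw [← mul_le_mul_iff_right₀ hLmin]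
  have hrhs : Lmin * (4 * n * (C + n * K ^ 2 * D ^ 2 / Lmin) * Δ) =
      Lmin * (4 * n * C * Δ) + 4 * n ^ 2 * K ^ 2 * D ^ 2 * Δ := by
    field_simp
  rw [hrhs]
  nlinarith

theorem le_div_add_four_of_sq_le_mul_sub {A : ℝ} {h : ℕ → ℝ} (hnn : ∀ t, 0 ≤ h t)
    (h0 : h 0 ≤ A / 4) (hrec : ∀ t, h t ^ 2 ≤ A * (h t - h (t + 1))) (t : ℕ) :
    h t ≤ A / (t + 4) := by
  induction t with
  | zero => simpa using h0
  | succ n ih =>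
    have hA : 0 ≤ A := by linarith [hnn 0]
    rcases hA.eq_or_lt with rfl | hApos
    · have := hrec (n + 1)
      rw [zero_mul] at this
      rw [zero_div]
      nlinarith
    have hn : h n * (n + 4) ≤ A := (le_div_iff₀ (by positivity)).1 ih
    rw [Nat.cast_succ, le_div_iff₀ (by positivity)]
    nlinarith [hnn n, hnn (n + 1), hrec n, sq_nonneg (A - (n + 4) * h n),
      mul_nonneg (mul_nonneg (sub_nonneg.2 hn) (hnn n)) (Nat.cast_nonneg (α := ℝ) n)]

section Cyclic

variable {k : ℕ} {E : Fin k → Type*} {idx : ℕ → Fin k}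

theorem idx_mul_add (hidx : ∀ t, (idx t : ℕ) = t % k) (t : ℕ) {l : ℕ} (hl : l < k) :
    idx (k * t + l) = ⟨l, hl⟩ :=
  Fin.ext <| by rw [hidx, Nat.mul_add_mod, Nat.mod_eq_of_lt hl]

theorem sum_range_idx_mul_add (hidx : ∀ t, (idx t : ℕ) = t % k) (t : ℕ) (F : Fin k → ℝ) :
    ∑ l ∈ range k, F (idx (k * t + l)) = ∑ j, F j := by
  rw [← Fin.sum_univ_eq_sum_range (fun l => F (idx (k * t + l)))]
  exact sum_congr rfl fun j _ => by rw [idx_mul_add hidx t j.isLt]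

variable {X : ℕ → PiLp 2 E} {Y : (t : ℕ) → E (idx t)}

theorem iterate_mem {P : ∀ i, Set (E i)} (hX0 : ∀ j, X 0 j ∈ P j)
    (hupd : ∀ t, X (t + 1) = Function.update (X t) (idx t) (Y t))
    (hY : ∀ t, (∀ j, X t j ∈ P j) → Y t ∈ P (idx t)) (t : ℕ) (j : Fin k) : X t j ∈ P j := by
  induction t generalizing j with
  | zero => exact hX0 j
  | succ t ih =>
    rw [hupd t]
    rcases eq_or_ne j (idx t) with rfl | hj
    · simpa using hY t ih
    · simpa [Function.update_of_ne hj] using ih j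

theorem iterate_apply_eq_of_forall_idx_ne
    (hupd : ∀ t, X (t + 1) = Function.update (X t) (idx t) (Y t)) (s j : ℕ) (b : Fin k)
    (h : ∀ m < j, idx (s + m) ≠ b) : X (s + j) b = X s b := by
  induction j with
  | zero => rfl
  | succ j ih =>
    rw [← add_assoc, hupd, Function.update_of_ne (h j j.lt_succ_self).symm]
    exact ih fun m hm => h m (hm.trans j.lt_succ_self)

variable [∀ i, NormedAddCommGroup (E i)] [∀ i, InnerProductSpace ℝ (E i)]

theorem inner_sub_le_sum_gap_add (hidx : ∀ t, (idx t : ℕ) = t % k)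
    (hupd : ∀ t, X (t + 1) = Function.update (X t) (idx t) (Y t))
    {P : ∀ i, Set (E i)} (hX : ∀ t j, X t j ∈ P j) {xstar : PiLp 2 E}
    (hxstar : ∀ j, xstar j ∈ P j) {g : PiLp 2 E → PiLp 2 E} {v : (t : ℕ) → E (idx t)}
    (hvmin : ∀ t, ∀ w ∈ P (idx t), ⟪g (X t) (idx t), v t⟫ ≤ ⟪g (X t) (idx t), w⟫)
    {D : Fin k → ℝ} (hdiam : ∀ j, ∀ a ∈ P j, ∀ b ∈ P j, ‖a - b‖ ≤ D j) {K : ℝ} (hK : 0 ≤ K)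
    (hLip : ∀ t u, ‖g (X t) - g (X u)‖ ≤ K * ‖X t - X u‖) (t : ℕ) :
    ⟪g (X (k * t)), X (k * t) - xstar⟫ ≤
      ∑ l ∈ range k, ⟪g (X (k * t + l)) (idx (k * t + l)),
        X (k * t + l) (idx (k * t + l)) - v (k * t + l)⟫ +
      K * (∑ l ∈ range k, dist (X (k * t + l)) (X (k * t + l + 1))) * ∑ j, D j := by
  set s := k * t
  set T := ∑ l ∈ range k, dist (X (s + l)) (X (s + l + 1))
  rw [PiLp.inner_apply, ← sum_range_idx_mul_add hidx t, ← sum_range_idx_mul_add hidx t D,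
    mul_sum, ← sum_add_distrib]
  refine sum_le_sum fun l hl => ?_
  rw [mem_range] at hl
  set i := idx (s + l)
  have hfix : X (s + l) i = X s i :=
    iterate_apply_eq_of_forall_idx_ne hupd s l i fun m hm => by
      simp only [i, s, idx_mul_add hidx t hl, idx_mul_add hidx t (hm.trans hl), ne_eq,
        Fin.mk.injEq]
      omega
  have hdisp : ‖X s - X (s + l)‖ ≤ T := by
    rw [← dist_eq_norm]
    exact (dist_le_range_sum_dist (fun m => X (s + m)) l).trans
      (sum_le_sum_of_subset_of_nonneg (range_subset_range.2 hl.le) fun _ _ _ => dist_nonneg)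
  have hdrift : ⟪g (X s) i - g (X (s + l)) i, X s i - xstar i⟫ ≤ K * T * D i :=
    real_inner_le_mul_of_norm_le ((PiLp.norm_apply_le (g (X s) - g (X (s + l))) i).trans <|
      (hLip _ _).trans (by gcongr)) (hdiam i _ (hX s i) _ (hxstar i))
  have hmin : ⟪g (X (s + l)) i, X s i - xstar i⟫ ≤ ⟪g (X (s + l)) i, X s i - v (s + l)⟫ := by
    rw [inner_sub_right, inner_sub_right]
    linarith [hvmin (s + l) _ (hxstar i)]
  rw [PiLp.sub_apply, hfix]
  have hsplit := inner_sub_left (𝕜 := ℝ) (g (X s) i) (g (X (s + l)) i) (X s i - xstar i)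
  linarith

end Cyclic

theorem cbcg_short_step_primal_rate_general
    {k : ℕ} (hk : 0 < k)
    {E : Fin k → Type*} [∀ i, NormedAddCommGroup (E i)]
    [∀ i, InnerProductSpace ℝ (E i)] [∀ i, CompleteSpace (E i)]
    (P : ∀ i, Set (E i))
    (hPcpt : ∀ i, IsCompact (P i))
    (hPconv : ∀ i, Convex ℝ (P i))
    (Dblk : Fin k → ℝ) (hD : ∀ i, Metric.diam (P i) = Dblk i)
    (D : ℝ) (hDdef : D = Real.sqrt (∑ i, Dblk i ^ 2))
    (S : Set (PiLp 2 E)) (hS : S = {z : PiLp 2 E | ∀ i, z i ∈ P i})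
    (f : PiLp 2 E → ℝ) (g : PiLp 2 E → PiLp 2 E)
    (hgrad : ∀ z : PiLp 2 E, HasGradientAt f (g z) z)
    (hconv : ConvexOn ℝ S f)
    (L : ℝ) (hL : ∀ z ∈ S, ∀ w ∈ S, ‖g z - g w‖ ≤ L * ‖z - w‖)
    (Lblk : Fin k → ℝ) (hLblkpos : ∀ i, 0 < Lblk i)
    (hLblk : ∀ i : Fin k, ∀ z ∈ S, ∀ w ∈ P i,
      ‖g z i - g (WithLp.toLp 2 (Function.update z i w)) i‖ ≤ Lblk i * ‖z i - w‖)
    (Gblk : Fin k → ℝ)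
    (hGblk : ∀ i : Fin k, ∀ z ∈ S, ‖g z i‖ ≤ Gblk i)
    (idx : ℕ → Fin k) (hidx : ∀ t : ℕ, (idx t : ℕ) = t % k)
    (X : ℕ → PiLp 2 E) (hX0 : X 0 ∈ S)
    (v : (t : ℕ) → E (idx t))
    (hvmem : ∀ t : ℕ, v t ∈ P (idx t))
    (hvmin : ∀ t : ℕ, ∀ w ∈ P (idx t), ⟪g (X t) (idx t), v t⟫ ≤ ⟪g (X t) (idx t), w⟫)
    (γ : ℕ → ℝ)
    (hγ : ∀ t : ℕ, γ t = min (⟪g (X t) (idx t), X t (idx t) - v t⟫ /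
      (Lblk (idx t) * ‖X t (idx t) - v t‖ ^ 2)) 1)
    (hupd : ∀ t : ℕ, X (t + 1) =
      Function.update (X t) (idx t) (X t (idx t) + γ t • (v t - X t (idx t))))
    (xstar : PiLp 2 E) (hxstarS : xstar ∈ S) (hxstar : ∀ z ∈ S, f xstar ≤ f z) :
    ∀ t : ℕ, f (X (k * t)) - f xstar ≤
      (4 * (k : ℝ) / ((t : ℝ) + 4)) *
        ((Finset.univ.sup' ⟨⟨0, hk⟩, Finset.mem_univ _⟩ fun i : Fin k =>
            max (Lblk i * Dblk i ^ 2) (Gblk i * Dblk i)) +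
          (k : ℝ) * L ^ 2 * D ^ 2 /
            (Finset.univ.inf' ⟨⟨0, hk⟩, Finset.mem_univ _⟩ fun i : Fin k => Lblk i)) := by
  subst hS
  set C := univ.sup' ⟨⟨0, hk⟩, mem_univ _⟩ fun i : Fin k =>
    max (Lblk i * Dblk i ^ 2) (Gblk i * Dblk i)
  set Lmin := univ.inf' ⟨⟨0, hk⟩, mem_univ _⟩ fun i : Fin k => Lblk i
  have hC : ∀ j, max (Lblk j * Dblk j ^ 2) (Gblk j * Dblk j) ≤ C := fun j =>
    le_sup' (fun i : Fin k => max (Lblk i * Dblk i ^ 2) (Gblk i * Dblk i)) (mem_univ j)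
  have hLmin : 0 < Lmin := (lt_inf'_iff _).2 fun j _ => hLblkpos j
  have hdiam : ∀ j, ∀ a ∈ P j, ∀ b ∈ P j, ‖a - b‖ ≤ Dblk j := fun j a ha b hb => by
    rw [← hD j, ← dist_eq_norm]
    exact Metric.dist_le_diam_of_mem (hPcpt j).isBounded ha hb
  have hX : ∀ t j, X t j ∈ P j := iterate_mem hX0 hupd fun t hXt =>
    (hPconv _).add_smul_sub_mem (hXt _) (hvmem t) <| hγ t ▸ min_div_one_mem_Icc
      (by rw [inner_sub_right]; linarith [hvmin t _ (hXt _)])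
      (by have := hLblkpos (idx t); positivity)
  have hstep : ∀ t, ⟪g (X t) (idx t), X t (idx t) - v t⟫ ^ 2 ≤ 2 * C * (f (X t) - f (X (t + 1)))
      ∧ Lmin * dist (X t) (X (t + 1)) ^ 2 ≤ 2 * (f (X t) - f (X (t + 1))) := fun t => by
    obtain ⟨hgap, hmove⟩ := block_short_step_sq_le hgrad (hPconv _) (hLblkpos _) (hX t _)
      (hLblk _ _ (hX t)) (hvmem t) (hvmin t) (hGblk _ _ (hX t))
      (hdiam _ _ (hX t _) _ (hvmem t)) (hC _) (hγ t) (hupd t)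
    refine ⟨hgap, le_trans ?_ hmove⟩
    rw [dist_comm, dist_eq_norm]
    exact mul_le_mul_of_nonneg_right (inf'_le _ (mem_univ _)) (sq_nonneg _)
  have hSD : (∑ j, Dblk j) ^ 2 ≤ k * D ^ 2 := by
    rw [hDdef, Real.sq_sqrt (sum_nonneg fun j _ => sq_nonneg _)]
    simpa using sq_sum_le_card_mul_sum_sq (s := univ) (f := Dblk)
  have hLip : ∀ t u, ‖g (X t) - g (X u)‖ ≤ |L| * ‖X t - X u‖ := fun t u =>
    (hL _ (hX t) _ (hX u)).trans (by gcongr; exact le_abs_self L)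
  have hepoch : ∀ t, (f (X (k * t)) - f xstar) ^ 2 ≤ 4 * k * (C + k * L ^ 2 * D ^ 2 / Lmin) *
      ((f (X (k * t)) - f xstar) - (f (X (k * (t + 1))) - f xstar)) := fun t => by
    have hgeom := (hconv.sub_le_inner_gradient (hgrad _) (hX _) hxstarS).trans
      (inner_sub_le_sum_gap_add hidx hupd hX hxstarS hvmin hdiam (abs_nonneg L) hLip t)
    have := sq_le_of_le_sum_add_mul_sum hLmin (sub_nonneg.2 (hxstar _ (hX _))) hgeom
      (fun l _ => (hstep _).1) (fun l _ => (hstep _).2) hSD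
    have htel : ∑ l ∈ range k, (f (X (k * t + l)) - f (X (k * t + l + 1))) =
        f (X (k * t)) - f (X (k * (t + 1))) := sum_range_sub' (fun l => f (X (k * t + l))) k
    rw [htel, sq_abs] at this
    rwa [sub_sub_sub_cancel_right]
  have h0 : f (X (k * 0)) - f xstar ≤ 4 * k * (C + k * L ^ 2 * D ^ 2 / Lmin) / 4 := by
    have hinner : ⟪g (X 0), X 0 - xstar⟫ ≤ k * C := by
      rw [PiLp.inner_apply]
      simpa using sum_le_sum (s := univ) fun j _ =>
        (real_inner_le_mul_of_norm_le (hGblk j _ (hX 0)) (hdiam j _ (hX 0 j) _ (hxstarS j))).trans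
          ((le_max_right _ _).trans (hC j))
    have := hconv.sub_le_inner_gradient (hgrad _) (hX 0) hxstarS
    have : 0 ≤ k * (k * L ^ 2 * D ^ 2 / Lmin) := by positivity
    rw [mul_zero]
    linarith
  intro t
  calc f (X (k * t)) - f xstar ≤ 4 * k * (C + k * L ^ 2 * D ^ 2 / Lmin) / (t + 4) :=
        le_div_add_four_of_sq_le_mul_sub (h := fun t => f (X (k * t)) - f xstar)
          (fun t => sub_nonneg.2 (hxstar _ (hX _))) h0 hepoch t
    _ = _ := by ring

/-- **Primal convergence of the Cyclic Block-Coordinate Conditional Gradient algorithm**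
with the short-step rule:
`f(x^{kt}) − f(x*) ≤ (4k/(t+4)) (max_i max{L_i D_i², G_i D_i} + k L² D² / min_i L_i)`. -/
theorem cbcg_short_step_primal_rate
    {k : ℕ} (hk : 0 < k)
    {E : Fin k → Type*} [∀ i, NormedAddCommGroup (E i)]
    [∀ i, InnerProductSpace ℝ (E i)] [∀ i, CompleteSpace (E i)]
    (P : ∀ i, Set (E i))
    (hPne : ∀ i, (P i).Nonempty) (hPcpt : ∀ i, IsCompact (P i))
    (hPconv : ∀ i, Convex ℝ (P i))
    (Dblk : Fin k → ℝ) (hD : ∀ i, Metric.diam (P i) = Dblk i)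
    (D : ℝ) (hDdef : D = Real.sqrt (∑ i, Dblk i ^ 2))
    (S : Set (PiLp 2 E)) (hS : S = {z : PiLp 2 E | ∀ i, z i ∈ P i})
    (f : PiLp 2 E → ℝ) (g : PiLp 2 E → PiLp 2 E)
    (hgrad : ∀ z : PiLp 2 E, HasGradientAt f (g z) z)
    (hconv : ConvexOn ℝ S f)
    (L : ℝ) (hL : ∀ z ∈ S, ∀ w ∈ S, ‖g z - g w‖ ≤ L * ‖z - w‖)
    (Lblk : Fin k → ℝ) (hLblkpos : ∀ i, 0 < Lblk i)
    (hLblk : ∀ i : Fin k, ∀ z ∈ S, ∀ w ∈ P i,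
      ‖g z i - g (WithLp.toLp 2 (Function.update z i w)) i‖ ≤ Lblk i * ‖z i - w‖)
    (Gblk : Fin k → ℝ)
    (hGblk : ∀ i : Fin k, ∀ z ∈ S, ‖g z i‖ ≤ Gblk i)
    (idx : ℕ → Fin k) (hidx : ∀ t : ℕ, (idx t : ℕ) = t % k)
    (X : ℕ → PiLp 2 E) (hX0 : X 0 ∈ S)
    (v : (t : ℕ) → E (idx t))
    (hvmem : ∀ t : ℕ, v t ∈ P (idx t))
    (hvmin : ∀ t : ℕ, ∀ w ∈ P (idx t), ⟪g (X t) (idx t), v t⟫ ≤ ⟪g (X t) (idx t), w⟫)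
    (γ : ℕ → ℝ)
    (hγ : ∀ t : ℕ, γ t = min (⟪g (X t) (idx t), X t (idx t) - v t⟫ /
      (Lblk (idx t) * ‖X t (idx t) - v t‖ ^ 2)) 1)
    (hupd : ∀ t : ℕ, X (t + 1) =
      Function.update (X t) (idx t) (X t (idx t) + γ t • (v t - X t (idx t))))
    (xstar : PiLp 2 E) (hxstarS : xstar ∈ S) (hxstar : ∀ z ∈ S, f xstar ≤ f z) :
    ∀ t : ℕ, f (X (k * t)) - f xstar ≤
      (4 * (k : ℝ) / ((t : ℝ) + 4)) *
        ((Finset.univ.sup' ⟨⟨0, hk⟩, Finset.mem_univ _⟩ fun i : Fin k =>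
            max (Lblk i * Dblk i ^ 2) (Gblk i * Dblk i)) +
          (k : ℝ) * L ^ 2 * D ^ 2 /
            (Finset.univ.inf' ⟨⟨0, hk⟩, Finset.mem_univ _⟩ fun i : Fin k => Lblk i)) :=
  cbcg_short_step_primal_rate_general hk P hPcpt hPconv Dblk hD D hDdef S hS f g hgrad hconv L hL
    Lblk hLblkpos hLblk Gblk hGblk idx hidx X hX0 v hvmem hvmin γ hγ hupd xstar hxstarS hxstar
end

section
/- Let P and Q be nonempty compact convex sets in a real inner product space with diameters D_P and D_Q. Consider the Alternating Linear Minimizations iterates with agnostic steps: x₀ ∈ P, y₀ ∈ Q, and for t ≥ 0, u_t ∈ P minimizes ⟨x_t − y_t, x⟩ over x ∈ P, x_{t+1} = x_t + (2/(t+2))(u_t − x_t); v_t ∈ Q minimizes ⟨y_t − x_{t+1}, y⟩ over y ∈ Q, y_{t+1} = y_t + (2/(t+2))(v_t − y_t). Then for every T ≥ 1: min_{1 ≤ t ≤ T} max_{x ∈ P, y ∈ Q} ( ‖x_t − y_t‖² − ⟨x_t − y_t, x − y⟩ ) ≤ 6.75 (1 + 2√2) (D_P² + D_Q²) / (T + 2).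 -/
/-!
Write `d_t = x_t - y_t`, `γ_t = 2/(t+2)` and
`g_t = ⟪d_t, x_t - u_t⟫ + ⟪x_{t+1} - y_t, v_t - y_t⟫ ≥ 0`. One alternating step satisfies
`‖d_{t+1}‖² = ‖d_t‖² - 2 γ_t g_t + γ_t² (‖x_t - u_t‖² + ‖v_t - y_t‖²)`,
and the Frank–Wolfe gap at step `t` is at most `g_t + γ_t D_P D_Q`, because `x_{t+1}` differs
from `x_t` by `γ_t (u_t - x_t)`.
Evaluating the gap at a minimiser of `‖p - q‖` over `P × Q` bounds the primal error `h_t` by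
`2 g_t + γ_t C`, with `C = D_P² + D_Q²`; hence `h_{t+1} ≤ (1 - γ_t) h_t + 2 γ_t² C` and
`h_t ≤ 8C/(t+2)`. Summing the descent inequality over the second half of the run then shows that
the smallest `g_t` there is `O(C/T)`, which yields the constant `25 ≤ 6.75 (1 + 2√2)`.
-/

open RealInnerProductSpace Metric Finset Bornology

theorem norm_sub_le_diam {E : Type*} [SeminormedAddCommGroup E] {P : Set E} (hP : IsBounded P)
    {a b : E} (ha : a ∈ P) (hb : b ∈ P) :
    ‖a - b‖ ≤ diam P :=
  dist_eq_norm a b ▸ dist_le_diam_of_mem hP ha hb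

theorem Convex.iterate_add_smul_sub_mem {𝕜 E : Type*} [Ring 𝕜] [PartialOrder 𝕜] [AddRightMono 𝕜]
    [AddCommGroup E] [Module 𝕜 E] {s : Set E} (hs : Convex 𝕜 s) {x u : ℕ → E} {γ : ℕ → 𝕜}
    (hγ : ∀ t, γ t ∈ Set.Icc 0 1) (hx₀ : x 0 ∈ s) (hu : ∀ t, u t ∈ s)
    (hx : ∀ t, x (t + 1) = x t + γ t • (u t - x t)) (t : ℕ) : x t ∈ s := by
  induction t with
  | zero => exact hx₀
  | succ t ih => exact hx t ▸ hs.add_smul_sub_mem ih (hu t) (hγ t)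

section InnerProductSpace

variable {G : Type*} [NormedAddCommGroup G] [InnerProductSpace ℝ G]

theorem norm_sub_smul_sq (d a : G) (γ : ℝ) :
    ‖d - γ • a‖ ^ 2 = ‖d‖ ^ 2 - 2 * γ * ⟪d, a⟫ + γ ^ 2 * ‖a‖ ^ 2 := by
  rw [norm_sub_sq_real, real_inner_smul_right, norm_smul, mul_pow, Real.norm_eq_abs, sq_abs]
  ring

theorem norm_sq_sub_norm_sq_le_two_mul_sub_inner (d w : G) :
    ‖d‖ ^ 2 - ‖w‖ ^ 2 ≤ 2 * (‖d‖ ^ 2 - ⟪d, w⟫) := by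
  nlinarith [norm_sub_sq_real d w, sq_nonneg ‖d - w‖]

theorem inner_sub_le_diam_mul_diam {P Q : Set G} (hP : IsBounded P) (hQ : IsBounded Q)
    {a b c d : G} (ha : a ∈ P) (hb : b ∈ P) (hc : c ∈ Q) (hd : d ∈ Q) :
    ⟪a - b, c - d⟫ ≤ diam P * diam Q :=
  (real_inner_le_norm _ _).trans <|
    mul_le_mul (norm_sub_le_diam hP ha hb) (norm_sub_le_diam hQ hc hd) (norm_nonneg _) diam_nonneg

variable {x y u v x' y' : G} {γ : ℝ}

theorem norm_sub_sq_alm_step (hx' : x' = x + γ • (u - x)) (hy' : y' = y + γ • (v - y)) :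
    ‖x' - y'‖ ^ 2 = ‖x - y‖ ^ 2 - 2 * γ * (⟪x - y, x - u⟫ + ⟪x' - y, v - y⟫)
      + γ ^ 2 * (‖x - u‖ ^ 2 + ‖v - y‖ ^ 2) := by
  have hx'y : x' - y = (x - y) - γ • (x - u) := by rw [hx']; module
  have hx'y' : x' - y' = (x' - y) - γ • (v - y) := by rw [hy']; module
  rw [hx'y', norm_sub_smul_sq, hx'y, norm_sub_smul_sq]
  ring

theorem inner_add_inner_nonneg_alm_step (hu : ⟪x - y, u⟫ ≤ ⟪x - y, x⟫)
    (hv : ⟪y - x', v⟫ ≤ ⟪y - x', y⟫) :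
    0 ≤ ⟪x - y, x - u⟫ + ⟪x' - y, v - y⟫ := by
  rw [← neg_sub x' y, inner_neg_left, inner_neg_left] at hv
  rw [inner_sub_right, inner_sub_right]
  linarith

theorem gap_le_alm_step {p q : G} (hx' : x' = x + γ • (u - x)) (hu : ⟪x - y, u⟫ ≤ ⟪x - y, p⟫)
    (hv : ⟪y - x', v⟫ ≤ ⟪y - x', q⟫) :
    ‖x - y‖ ^ 2 - ⟪x - y, p - q⟫
      ≤ ⟪x - y, x - u⟫ + ⟪x' - y, v - y⟫ + γ * ⟪x - u, q - y⟫ := by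
  have hsplit : ‖x - y‖ ^ 2 - ⟪x - y, p - q⟫ = ⟪x - y, x - p⟫ + ⟪x - y, q - y⟫ := by
    rw [← real_inner_self_eq_norm_sq]
    simp only [inner_sub_right]
    ring
  have hshift : ⟪x - y, q - y⟫ = ⟪x' - y, q - y⟫ + γ * ⟪x - u, q - y⟫ := by
    rw [show x - y = (x' - y) + γ • (x - u) by rw [hx']; module, inner_add_left,
      real_inner_smul_left]
  rw [← neg_sub x' y, inner_neg_left, inner_neg_left] at hv
  rw [hsplit, hshift]
  simp only [inner_sub_right] at hu hv ⊢
  linarith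

variable {P Q : Set G}

theorem norm_sub_sq_alm_step_le (hP : IsBounded P) (hQ : IsBounded Q) (hx : x ∈ P) (hu : u ∈ P)
    (hy : y ∈ Q) (hv : v ∈ Q) (hx' : x' = x + γ • (u - x)) (hy' : y' = y + γ • (v - y)) :
    ‖x' - y'‖ ^ 2 ≤ ‖x - y‖ ^ 2 - 2 * γ * (⟪x - y, x - u⟫ + ⟪x' - y, v - y⟫)
      + γ ^ 2 * (diam P ^ 2 + diam Q ^ 2) := by
  rw [norm_sub_sq_alm_step hx' hy']
  gcongr
  exacts [norm_sub_le_diam hP hx hu, norm_sub_le_diam hQ hv hy]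

theorem gap_le_alm_step_of_mem {p q : G} (hP : IsBounded P) (hQ : IsBounded Q) (hγ : 0 ≤ γ)
    (hx : x ∈ P) (hu : u ∈ P) (hy : y ∈ Q) (hq : q ∈ Q) (hx' : x' = x + γ • (u - x))
    (hup : ⟪x - y, u⟫ ≤ ⟪x - y, p⟫) (hvq : ⟪y - x', v⟫ ≤ ⟪y - x', q⟫) :
    ‖x - y‖ ^ 2 - ⟪x - y, p - q⟫
      ≤ ⟪x - y, x - u⟫ + ⟪x' - y, v - y⟫ + γ * (diam P ^ 2 + diam Q ^ 2) / 2 := by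
  have hPQ := inner_sub_le_diam_mul_diam hP hQ hx hu hq hy
  nlinarith [gap_le_alm_step hx' hup hvq, two_mul_le_add_sq (diam P) (diam Q),
    mul_le_mul_of_nonneg_left hPQ hγ]

end InnerProductSpace

noncomputable def agnosticStep (t : ℕ) : ℝ := 2 / (t + 2)

theorem agnosticStep_zero : agnosticStep 0 = 1 := by norm_num [agnosticStep]

theorem agnosticStep_mem_Icc (t : ℕ) : agnosticStep t ∈ Set.Icc 0 1 :=
  ⟨by unfold agnosticStep; positivity, by
    rw [agnosticStep, div_le_one (by positivity)]; linarith [t.cast_nonneg (α := ℝ)]⟩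

theorem antitone_agnosticStep : Antitone agnosticStep := fun a b hab => by
  unfold agnosticStep
  gcongr

theorem agnosticStep_sq_le (t : ℕ) : agnosticStep t ^ 2 ≤ 4 / (t + 1) - 4 / (t + 2) := by
  have ht : (0 : ℝ) ≤ t := t.cast_nonneg
  rw [agnosticStep, div_pow, div_sub_div _ _ (by positivity) (by positivity),
    div_le_div_iff₀ (by positivity) (by positivity)]
  nlinarith

theorem le_of_agnosticStep_recursion {h : ℕ → ℝ} {C : ℝ} (hC : 0 ≤ C)
    (hrec : ∀ t, h (t + 1) ≤ (1 - agnosticStep t) * h t + 2 * agnosticStep t ^ 2 * C) :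
    ∀ t, 1 ≤ t → h t ≤ 8 * C / (t + 2) := by
  intro t ht
  induction t, ht using Nat.le_induction with
  | base =>
    have h1 := hrec 0
    rw [agnosticStep_zero] at h1
    norm_num at h1 ⊢
    linarith
  | succ t _ ih =>
    have hγ := agnosticStep_mem_Icc t
    have ht : (0 : ℝ) ≤ t := t.cast_nonneg
    calc h (t + 1) ≤ (1 - agnosticStep t) * (8 * C / (t + 2)) + 2 * agnosticStep t ^ 2 * C :=
          (hrec t).trans (by gcongr; linarith [hγ.2])
      _ = 8 * C * (t + 1) / (t + 2) ^ 2 := by rw [agnosticStep]; field_simp; ring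
      _ ≤ 8 * C / ((t + 1 : ℕ) + 2) := by
          rw [div_le_div_iff₀ (by positivity) (by positivity)]; push_cast; nlinarith

theorem add_sum_le_of_descent {f g : ℕ → ℝ} {C : ℝ} (hC : 0 ≤ C)
    (hdesc : ∀ t, f (t + 1) ≤ f t - 2 * agnosticStep t * g t + agnosticStep t ^ 2 * C)
    (s n : ℕ) :
    f (s + n) + ∑ i ∈ range n, 2 * agnosticStep (s + i) * g (s + i)
      ≤ f s + 4 * C / (s + 1) - 4 * C / ((s + n : ℕ) + 1) := by
  induction n with
  | zero => simp
  | succ n ih =>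
    have hsq := mul_le_mul_of_nonneg_left (agnosticStep_sq_le (s + n)) hC
    have hcast : ((s + (n + 1) : ℕ) : ℝ) + 1 = (s + n : ℕ) + 2 := by push_cast; ring
    rw [sum_range_succ, ← add_assoc, hcast, ← Nat.add_assoc]
    rw [mul_sub, mul_div_assoc', mul_div_assoc', mul_comm C 4] at hsq
    linarith [hdesc (s + n)]

theorem window_rate_ineq {T : ℝ} (hT : 1 ≤ T) :
    (T + 2) / (2 * T) * (16 / (T + 5) + 8 / (T + 3)) + 2 / (T + 5) ≤ 25 / (T + 2) := by
  have hT0 : 0 < T := by linarith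
  rw [← sub_nonneg]
  have key : 25 / (T + 2) - ((T + 2) / (2 * T) * (16 / (T + 5) + 8 / (T + 3)) + 2 / (T + 5))
      = (22 * T ^ 3 + 196 * T ^ 2 + 278 * T - 352) / (2 * T * (T + 2) * (T + 3) * (T + 5)) := by
    field_simp
    ring
  rw [key]
  apply div_nonneg <;> nlinarith [mul_pos hT0 hT0]

theorem window_rate_le {T s n C G : ℝ} (hT : 1 ≤ T) (hs : T + 1 ≤ 2 * s) (hn : T ≤ 2 * n)
    (hC : 0 ≤ C) (hG : n * (2 * (2 / (T + 2)) * G) ≤ 8 * C / (s + 2) + 4 * C / (s + 1)) :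
    G + C / (s + 2) ≤ 25 * C / (T + 2) := by
  have hT0 : 0 < T := by linarith
  have hs0 : 0 < s := by linarith
  have hn0 : 0 < n := by linarith
  have hG' : G ≤ (T + 2) / (4 * n) * (C * (8 / (s + 2) + 4 / (s + 1))) := by
    rw [div_mul_eq_mul_div, le_div_iff₀ (by positivity)]
    rw [show n * (2 * (2 / (T + 2)) * G) = G * (4 * n) / (T + 2) by ring,
      show 8 * C / (s + 2) + 4 * C / (s + 1) = C * (8 / (s + 2) + 4 / (s + 1)) by ring,
      div_le_iff₀ (by positivity)] at hG
    linarith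
  calc G + C / (s + 2)
      ≤ (T + 2) / (4 * n) * (C * (8 / (s + 2) + 4 / (s + 1))) + C * (1 / (s + 2)) := by
        rw [mul_one_div]
        linarith
    _ ≤ (T + 2) / (2 * T) * (C * (16 / (T + 5) + 8 / (T + 3))) + C * (2 / (T + 5)) := by
        gcongr ?_ * (C * (?_ + ?_)) + C * ?_
        · exact div_le_div_of_nonneg_left (by positivity) (by positivity) (by linarith)
        · rw [div_le_div_iff₀ (by positivity) (by positivity)]; linarith
        · rw [div_le_div_iff₀ (by positivity) (by positivity)]; linarith
        · rw [div_le_div_iff₀ (by positivity) (by positivity)]; linarith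
    _ = C * ((T + 2) / (2 * T) * (16 / (T + 5) + 8 / (T + 3)) + 2 / (T + 5)) := by ring
    _ ≤ C * (25 / (T + 2)) := by gcongr; exact window_rate_ineq hT
    _ = 25 * C / (T + 2) := by ring

theorem exists_le_of_descent {f g : ℕ → ℝ} {fs C : ℝ} (hC : 0 ≤ C) (hg : ∀ t, 0 ≤ g t)
    (hfs : ∀ t, fs ≤ f t)
    (hdesc : ∀ t, f (t + 1) ≤ f t - 2 * agnosticStep t * g t + agnosticStep t ^ 2 * C)
    (hlow : ∀ t, f t - fs ≤ 2 * g t + agnosticStep t * C) {T : ℕ} (hT : 1 ≤ T) :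
    ∃ t, 1 ≤ t ∧ t ≤ T ∧ g t + agnosticStep t * C / 2 ≤ 25 * C / (T + 2) := by
  have hrate : ∀ t, 1 ≤ t → f t - fs ≤ 8 * C / (t + 2) :=
    le_of_agnosticStep_recursion hC fun t => by
      nlinarith [hdesc t, hlow t, (agnosticStep_mem_Icc t).1]
  -- average the descent over the second half `[s, T]` of the run
  set s := T / 2 + 1
  set n := T - s + 1 with hn
  have hsn : s + n = T + 1 := by omega
  obtain ⟨i, hi, hmin⟩ := (range n).exists_min_image (fun i => g (s + i)) ⟨0, by simp [hn]⟩
  have hiT : s + i ≤ T := by rw [mem_range] at hi; omega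
  have hwindow : n * (2 * agnosticStep T * g (s + i))
      ≤ ∑ j ∈ range n, 2 * agnosticStep (s + j) * g (s + j) := by
    have := card_nsmul_le_sum (range n) (fun j => 2 * agnosticStep (s + j) * g (s + j))
      (2 * agnosticStep T * g (s + i)) fun j hj => by
        have : s + j ≤ T := by rw [mem_range] at hj; omega
        gcongr
        exacts [hg _, by linarith [(agnosticStep_mem_Icc (s + j)).1],
          antitone_agnosticStep this, hmin j hj]
    rwa [card_range, nsmul_eq_mul] at this
  refine ⟨s + i, by omega, hiT, ?_⟩
  have hsum := add_sum_le_of_descent hC hdesc s n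
  rw [hsn] at hsum
  have hstep : agnosticStep (s + i) * C / 2 ≤ C / (s + 2) :=
    calc agnosticStep (s + i) * C / 2 ≤ agnosticStep s * C / 2 := by
          gcongr; exact antitone_agnosticStep (Nat.le_add_right s i)
      _ = C / (s + 2) := by rw [agnosticStep]; ring
  have hTs : (T : ℝ) + 1 ≤ 2 * s := by exact_mod_cast (by omega : T + 1 ≤ 2 * s)
  have hTn : (T : ℝ) ≤ 2 * n := by exact_mod_cast (by omega : T ≤ 2 * n)
  have hmin_le : n * (2 * agnosticStep T * g (s + i)) ≤ 8 * C / (s + 2) + 4 * C / (s + 1) := by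
    linarith [hrate s (by omega), hfs (T + 1),
      show (0 : ℝ) ≤ 4 * C / ((T + 1 : ℕ) + 1) by positivity]
  linarith [window_rate_le (by exact_mod_cast hT) hTs hTn hC hmin_le]

theorem alm_agnostic_dual_gap_rate_general
    {G : Type*} [NormedAddCommGroup G] [InnerProductSpace ℝ G]
    (P Q : Set G)
    (hPcpt : IsCompact P) (hQcpt : IsCompact Q)
    (hPconv : Convex ℝ P) (hQconv : Convex ℝ Q)
    (DP DQ : ℝ) (hDP : Metric.diam P = DP) (hDQ : Metric.diam Q = DQ)
    (x y u v : ℕ → G) (hx0 : x 0 ∈ P) (hy0 : y 0 ∈ Q)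
    (humem : ∀ t : ℕ, u t ∈ P)
    (humin : ∀ t : ℕ, ∀ w ∈ P, ⟪x t - y t, u t⟫ ≤ ⟪x t - y t, w⟫)
    (hxupd : ∀ t : ℕ, x (t + 1) = x t + (2 / ((t : ℝ) + 2)) • (u t - x t))
    (hvmem : ∀ t : ℕ, v t ∈ Q)
    (hvmin : ∀ t : ℕ, ∀ w ∈ Q, ⟪y t - x (t + 1), v t⟫ ≤ ⟪y t - x (t + 1), w⟫)
    (hyupd : ∀ t : ℕ, y (t + 1) = y t + (2 / ((t : ℝ) + 2)) • (v t - y t)) :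
    ∀ T : ℕ, 1 ≤ T → ∃ t : ℕ, 1 ≤ t ∧ t ≤ T ∧
      ∀ p ∈ P, ∀ q ∈ Q,
        ‖x t - y t‖ ^ 2 - ⟪x t - y t, p - q⟫ ≤
          6.75 * (1 + 2 * Real.sqrt 2) * (DP ^ 2 + DQ ^ 2) / ((T : ℝ) + 2) := by
  subst hDP hDQ
  intro T hT
  have hP := hPcpt.isBounded
  have hQ := hQcpt.isBounded
  have hxP : ∀ t, x t ∈ P :=
    hPconv.iterate_add_smul_sub_mem agnosticStep_mem_Icc hx0 humem hxupd
  have hyQ : ∀ t, y t ∈ Q :=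
    hQconv.iterate_add_smul_sub_mem agnosticStep_mem_Icc hy0 hvmem hyupd
  set C := diam P ^ 2 + diam Q ^ 2
  have hC : 0 ≤ C := by positivity
  set g : ℕ → ℝ := fun t => ⟪x t - y t, x t - u t⟫ + ⟪x (t + 1) - y t, v t - y t⟫
  have hgap : ∀ t, ∀ p ∈ P, ∀ q ∈ Q,
      ‖x t - y t‖ ^ 2 - ⟪x t - y t, p - q⟫ ≤ g t + agnosticStep t * C / 2 :=
    fun t p hp q hq => gap_le_alm_step_of_mem hP hQ (agnosticStep_mem_Icc t).1 (hxP t) (humem t)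
      (hyQ t) hq (hxupd t) (humin t p hp) (hvmin t q hq)
  have hdesc : ∀ t, ‖x (t + 1) - y (t + 1)‖ ^ 2
      ≤ ‖x t - y t‖ ^ 2 - 2 * agnosticStep t * g t + agnosticStep t ^ 2 * C := fun t =>
    norm_sub_sq_alm_step_le hP hQ (hxP t) (humem t) (hyQ t) (hvmem t) (hxupd t) (hyupd t)
  have hg : ∀ t, 0 ≤ g t := fun t =>
    inner_add_inner_nonneg_alm_step (humin t _ (hxP t)) (hvmin t _ (hyQ t))
  obtain ⟨z, hz, hzmin⟩ := (hPcpt.prod hQcpt).exists_isMinOn ⟨(x 0, y 0), hx0, hy0⟩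
    (by fun_prop : Continuous fun w : G × G => ‖w.1 - w.2‖ ^ 2).continuousOn
  have hfs : ∀ t, ‖z.1 - z.2‖ ^ 2 ≤ ‖x t - y t‖ ^ 2 := fun t =>
    isMinOn_iff.mp hzmin (x t, y t) ⟨hxP t, hyQ t⟩
  have hlow : ∀ t, ‖x t - y t‖ ^ 2 - ‖z.1 - z.2‖ ^ 2 ≤ 2 * g t + agnosticStep t * C :=
    fun t => by
      linarith [norm_sq_sub_norm_sq_le_two_mul_sub_inner (x t - y t) (z.1 - z.2),
        hgap t _ hz.1 _ hz.2]
  obtain ⟨t, ht1, htT, ht⟩ := exists_le_of_descent hC hg hfs hdesc hlow hT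
  refine ⟨t, ht1, htT, fun p hp q hq => (hgap t p hp q hq).trans (ht.trans ?_)⟩
  gcongr
  nlinarith [Real.sq_sqrt (show (0 : ℝ) ≤ 2 by norm_num), Real.sqrt_nonneg 2]

/-- **Frank–Wolfe-gap convergence of Alternating Linear Minimizations** with the
agnostic step-size rule `γ_t = 2/(t+2)`:
`min_{1 ≤ t ≤ T} max_{x ∈ P, y ∈ Q} (‖x_t − y_t‖² − ⟨x_t − y_t, x − y⟩)
≤ 6.75 (1+2√2)(D_P²+D_Q²)/(T+2)`. -/
theorem alm_agnostic_dual_gap_rate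
    {G : Type*} [NormedAddCommGroup G] [InnerProductSpace ℝ G]
    (P Q : Set G) (hPne : P.Nonempty) (hQne : Q.Nonempty)
    (hPcpt : IsCompact P) (hQcpt : IsCompact Q)
    (hPconv : Convex ℝ P) (hQconv : Convex ℝ Q)
    (DP DQ : ℝ) (hDP : Metric.diam P = DP) (hDQ : Metric.diam Q = DQ)
    (x y u v : ℕ → G) (hx0 : x 0 ∈ P) (hy0 : y 0 ∈ Q)
    (humem : ∀ t : ℕ, u t ∈ P)
    (humin : ∀ t : ℕ, ∀ w ∈ P, ⟪x t - y t, u t⟫ ≤ ⟪x t - y t, w⟫)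
    (hxupd : ∀ t : ℕ, x (t + 1) = x t + (2 / ((t : ℝ) + 2)) • (u t - x t))
    (hvmem : ∀ t : ℕ, v t ∈ Q)
    (hvmin : ∀ t : ℕ, ∀ w ∈ Q, ⟪y t - x (t + 1), v t⟫ ≤ ⟪y t - x (t + 1), w⟫)
    (hyupd : ∀ t : ℕ, y (t + 1) = y t + (2 / ((t : ℝ) + 2)) • (v t - y t)) :
    ∀ T : ℕ, 1 ≤ T → ∃ t : ℕ, 1 ≤ t ∧ t ≤ T ∧
      ∀ p ∈ P, ∀ q ∈ Q,
        ‖x t - y t‖ ^ 2 - ⟪x t - y t, p - q⟫ ≤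
          6.75 * (1 + 2 * Real.sqrt 2) * (DP ^ 2 + DQ ^ 2) / ((T : ℝ) + 2) :=
  alm_agnostic_dual_gap_rate_general P Q hPcpt hQcpt hPconv hQconv DP DQ hDP hDQ x y u v hx0 hy0
    humem humin hxupd hvmem hvmin hyupd
end

section
/- Let P and Q be nonempty compact convex sets in a real inner product space with diameters D_P and D_Q. Consider the Alternating Linear Minimizations iterates with agnostic steps γ_{t,1} = γ_{t,2} = 2/(t+2): x₀ ∈ P, y₀ ∈ Q, and for t ≥ 0, u_t ∈ P minimizes ⟨x_t − y_t, x⟩ over P, x_{t+1} = x_t + (2/(t+2))(u_t − x_t); v_t ∈ Q minimizes ⟨y_t − x_{t+1}, y⟩ over Q, y_{t+1} = y_t + (2/(t+2))(v_t − y_t). Then: (a) if for some t ≥ 0 one has ‖x_t − y_t‖² > 4(1 + 2√2)(D_P² + D_Q²)/(t + 2), then P ∩ Q = ∅; (b) conversely, if P ∩ Q = ∅, then the inequality ‖x_t − y_t‖² > 4(1 + 2√2)(D_P² + D_Q²)/(t + 2) holds for every t with t + 2 > 4(1 + 2√2)(D_P² + D_Q²)/dist(P, Q)². -/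
/-!
If `z ∈ P ∩ Q`, testing both linear minimizations against `z` shows that one ALM step
contracts the gap: with `γ_t = 2/(t+2)`,
`‖x_{t+1} - y_{t+1}‖² ≤ (1 - 2γ_t) ‖x_t - y_t‖² + γ_t² (D_P + D_Q)²`.
This recursion gives `‖x_t - y_t‖² ≤ 3(D_P + D_Q)²/(t+2) ≤ 6(D_P² + D_Q²)/(t+2)`,
which is below the threshold, so exceeding it certifies disjointness. Conversely the
iterates stay in `P` and `Q`, so `‖x_t - y_t‖ ≥ dist(P, Q)`, which beats the threshold once
`t + 2` is large.
-/

open RealInnerProductSpace Metric Set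

section

variable {G : Type*} [NormedAddCommGroup G] [InnerProductSpace ℝ G]

/-- Alternating Linear Minimizations over `P` and `Q` with the agnostic steps `2/(t+2)`. -/
structure IsALMIterates (P Q : Set G) (x y u v : ℕ → G) : Prop where
  x_zero_mem : x 0 ∈ P
  y_zero_mem : y 0 ∈ Q
  u_mem : ∀ t, u t ∈ P
  u_min : ∀ t, ∀ w ∈ P, ⟪x t - y t, u t⟫ ≤ ⟪x t - y t, w⟫
  x_succ : ∀ t : ℕ, x (t + 1) = x t + (2 / ((t : ℝ) + 2)) • (u t - x t)
  v_mem : ∀ t, v t ∈ Q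
  v_min : ∀ t, ∀ w ∈ Q, ⟪y t - x (t + 1), v t⟫ ≤ ⟪y t - x (t + 1), w⟫
  y_succ : ∀ t : ℕ, y (t + 1) = y t + (2 / ((t : ℝ) + 2)) • (v t - y t)

theorem norm_add_smul_sub_sq_le {c a u z : G} {γ D : ℝ} (hγ : 0 ≤ γ)
    (hu : ⟪c, u⟫ ≤ ⟪c, z⟫) (hD : ‖u - a‖ ≤ D) :
    ‖c + γ • (u - a)‖ ^ 2 ≤ ‖c‖ ^ 2 + 2 * γ * ⟪c, z - a⟫ + γ ^ 2 * D ^ 2 := by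
  have hinner : ⟪c, u - a⟫ ≤ ⟪c, z - a⟫ := by
    simp only [inner_sub_right]
    linarith
  have hsq : ‖u - a‖ ^ 2 ≤ D ^ 2 := pow_le_pow_left₀ (norm_nonneg _) hD 2
  rw [norm_add_sq_real, inner_smul_right, norm_smul, mul_pow, Real.norm_eq_abs, sq_abs]
  nlinarith [mul_le_mul_of_nonneg_left hinner hγ, mul_le_mul_of_nonneg_left hsq (sq_nonneg γ)]

theorem norm_sub_sq_alm_step_le_s15 {a b u v z : G} {γ DP DQ : ℝ} (hγ : 0 ≤ γ)
    (hu : ⟪a - b, u⟫ ≤ ⟪a - b, z⟫)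
    (hv : ⟪b - (a + γ • (u - a)), v⟫ ≤ ⟪b - (a + γ • (u - a)), z⟫)
    (hua : ‖u - a‖ ≤ DP) (hvb : ‖v - b‖ ≤ DQ) (hzb : ‖z - b‖ ≤ DQ) :
    ‖(a + γ • (u - a)) - (b + γ • (v - b))‖ ^ 2 ≤
      (1 - 2 * γ) * ‖a - b‖ ^ 2 + γ ^ 2 * (DP + DQ) ^ 2 := by
  set a' := a + γ • (u - a) with ha'
  have hx := norm_add_smul_sub_sq_le hγ hu hua
  have hy := norm_add_smul_sub_sq_le hγ hv hvb
  rw [show a - b + γ • (u - a) = a' - b by rw [ha']; abel] at hx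
  rw [show b - a' + γ • (v - b) = -(a' - (b + γ • (v - b))) by abel, norm_neg,
    norm_sub_rev b a'] at hy
  have hcross : ⟪b - a', z - b⟫ = -⟪a - b, z - b⟫ - γ * ⟪u - a, z - b⟫ := by
    rw [ha', show b - (a + γ • (u - a)) = -(a - b) - γ • (u - a) by abel, inner_sub_left,
      inner_neg_left, real_inner_smul_left]
  have hgap : ⟪a - b, z - a⟫ - ⟪a - b, z - b⟫ = -‖a - b‖ ^ 2 := by
    rw [← inner_sub_right, show z - a - (z - b) = -(a - b) by abel, inner_neg_right,
      real_inner_self_eq_norm_sq]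
  have hcs : -⟪u - a, z - b⟫ ≤ DP * DQ :=
    (neg_le_abs _).trans ((abs_real_inner_le_norm _ _).trans
      (mul_le_mul hua hzb (norm_nonneg _) ((norm_nonneg _).trans hua)))
  nlinarith [mul_le_mul_of_nonneg_left hcs (sq_nonneg γ)]

theorem le_three_mul_div_of_agnostic_recursion {e : ℕ → ℝ} {K : ℝ} (hK : 0 ≤ K)
    (he : ∀ t, 0 ≤ e t) (h0 : e 0 ≤ K)
    (hstep : ∀ t : ℕ, e (t + 1) ≤
      (1 - 2 * (2 / ((t : ℝ) + 2))) * e t + (2 / ((t : ℝ) + 2)) ^ 2 * K) :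
    ∀ t : ℕ, e t ≤ 3 * K / ((t : ℝ) + 2) := by
  intro t
  induction t with
  | zero => norm_num; linarith
  | succ t ih =>
    have ht : (0 : ℝ) ≤ t := t.cast_nonneg
    have hcleared : e (t + 1) * (t + 2) ^ 2 ≤ (t - 2) * ((t + 2) * e t) + 4 * K := by
      rw [← le_div_iff₀ (by positivity)]
      refine (hstep t).trans_eq ?_
      field_simp
      ring
    rw [le_div_iff₀ (by positivity)] at ih
    have hsq : e (t + 1) * (t + 2) ^ 2 * (t + 3) ≤ 3 * K * (t + 2) ^ 2 := by
      rcases le_total 2 (t : ℝ) with h2 | h2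
      · have h : e (t + 1) * (t + 2) ^ 2 ≤ K * (3 * t - 2) := by
          nlinarith [mul_le_mul_of_nonneg_left ih (sub_nonneg.2 h2)]
        nlinarith [mul_le_mul_of_nonneg_right h (by positivity : (0 : ℝ) ≤ t + 3)]
      · have h : e (t + 1) * (t + 2) ^ 2 ≤ 4 * K := by
          have hcur : 0 ≤ (2 - t) * ((t + 2) * e t) :=
            mul_nonneg (sub_nonneg.2 h2) (mul_nonneg (by positivity) (he t))
          nlinarith
        nlinarith [mul_le_mul_of_nonneg_right h (by positivity : (0 : ℝ) ≤ t + 3),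
          mul_nonneg hK ht]
    push_cast
    rw [le_div_iff₀ (by positivity)]
    nlinarith [pow_pos (by linarith : (0 : ℝ) < t + 2) 2]

theorem two_div_nat_add_two_mem_Icc (t : ℕ) : 2 / ((t : ℝ) + 2) ∈ Icc (0 : ℝ) 1 :=
  ⟨by positivity, (div_le_one (by positivity)).2 (by linarith [t.cast_nonneg (α := ℝ)])⟩

namespace IsALMIterates

variable {P Q : Set G} {x y u v : ℕ → G}

theorem mem (h : IsALMIterates P Q x y u v) (hP : Convex ℝ P) (hQ : Convex ℝ Q) (t : ℕ) :
    x t ∈ P ∧ y t ∈ Q := by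
  induction t with
  | zero => exact ⟨h.x_zero_mem, h.y_zero_mem⟩
  | succ t ih =>
    rw [h.x_succ, h.y_succ]
    exact ⟨hP.add_smul_sub_mem ih.1 (h.u_mem t) (two_div_nat_add_two_mem_Icc t),
      hQ.add_smul_sub_mem ih.2 (h.v_mem t) (two_div_nat_add_two_mem_Icc t)⟩

theorem norm_sub_sq_le_of_mem_inter (h : IsALMIterates P Q x y u v)
    (hP : Convex ℝ P) (hQ : Convex ℝ Q) (hPb : Bornology.IsBounded P)
    (hQb : Bornology.IsBounded Q) {z : G} (hzP : z ∈ P) (hzQ : z ∈ Q) (t : ℕ) :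
    ‖x t - y t‖ ^ 2 ≤ 3 * (diam P + diam Q) ^ 2 / ((t : ℝ) + 2) := by
  have hdiamP {p p'} (hp : p ∈ P) (hp' : p' ∈ P) : ‖p - p'‖ ≤ diam P := by
    rw [← dist_eq_norm]; exact dist_le_diam_of_mem hPb hp hp'
  have hdiamQ {q q'} (hq : q ∈ Q) (hq' : q' ∈ Q) : ‖q - q'‖ ≤ diam Q := by
    rw [← dist_eq_norm]; exact dist_le_diam_of_mem hQb hq hq'
  refine le_three_mul_div_of_agnostic_recursion (e := fun t ↦ ‖x t - y t‖ ^ 2)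
    (sq_nonneg _) (fun _ ↦ sq_nonneg _) ?_ ?_ t
  · have h0 : ‖x 0 - y 0‖ ≤ diam P + diam Q :=
      (norm_sub_le_norm_sub_add_norm_sub _ z _).trans
        (add_le_add (hdiamP h.x_zero_mem hzP) (hdiamQ hzQ h.y_zero_mem))
    exact pow_le_pow_left₀ (norm_nonneg _) h0 2
  · intro t
    have hv := h.v_min t z hzQ
    rw [h.x_succ] at hv
    rw [h.x_succ, h.y_succ]
    exact norm_sub_sq_alm_step_le_s15 (two_div_nat_add_two_mem_Icc t).1 (h.u_min t z hzP) hv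
      (hdiamP (h.u_mem t) (h.mem hP hQ t).1) (hdiamQ (h.v_mem t) (h.mem hP hQ t).2)
      (hdiamQ hzQ (h.mem hP hQ t).2)

end IsALMIterates

end

theorem alm_certify_disjoint_general
    {G : Type*} [NormedAddCommGroup G] [InnerProductSpace ℝ G]
    (P Q : Set G)
    (hPcpt : IsCompact P) (hQcpt : IsCompact Q)
    (hPconv : Convex ℝ P) (hQconv : Convex ℝ Q)
    (DP DQ : ℝ) (hDP : Metric.diam P = DP) (hDQ : Metric.diam Q = DQ)
    (xs ys : G) (hxs : xs ∈ P) (hys : ys ∈ Q)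
    (hmin : ∀ p ∈ P, ∀ q ∈ Q, ‖xs - ys‖ ≤ ‖p - q‖)
    (x y u v : ℕ → G) (hx0 : x 0 ∈ P) (hy0 : y 0 ∈ Q)
    (humem : ∀ t : ℕ, u t ∈ P)
    (humin : ∀ t : ℕ, ∀ w ∈ P, ⟪x t - y t, u t⟫ ≤ ⟪x t - y t, w⟫)
    (hxupd : ∀ t : ℕ, x (t + 1) = x t + (2 / ((t : ℝ) + 2)) • (u t - x t))
    (hvmem : ∀ t : ℕ, v t ∈ Q)
    (hvmin : ∀ t : ℕ, ∀ w ∈ Q, ⟪y t - x (t + 1), v t⟫ ≤ ⟪y t - x (t + 1), w⟫)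
    (hyupd : ∀ t : ℕ, y (t + 1) = y t + (2 / ((t : ℝ) + 2)) • (v t - y t)) :
    ((∃ t : ℕ, ‖x t - y t‖ ^ 2 >
        4 * (1 + 2 * Real.sqrt 2) * (DP ^ 2 + DQ ^ 2) / ((t : ℝ) + 2)) →
      P ∩ Q = ∅) ∧
    (P ∩ Q = ∅ →
      ∀ t : ℕ,
        (t : ℝ) + 2 > 4 * (1 + 2 * Real.sqrt 2) * (DP ^ 2 + DQ ^ 2) / ‖xs - ys‖ ^ 2 →
        ‖x t - y t‖ ^ 2 >
          4 * (1 + 2 * Real.sqrt 2) * (DP ^ 2 + DQ ^ 2) / ((t : ℝ) + 2)) := by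
  have hALM : IsALMIterates P Q x y u v :=
    ⟨hx0, hy0, humem, humin, hxupd, hvmem, hvmin, hyupd⟩
  subst hDP hDQ
  refine ⟨fun ⟨t, ht⟩ ↦ ?_, fun hPQ t ht ↦ ?_⟩
  · by_contra hne
    obtain ⟨z, hzP, hzQ⟩ := nonempty_iff_ne_empty.2 hne
    have hle := hALM.norm_sub_sq_le_of_mem_inter hPconv hQconv hPcpt.isBounded
      hQcpt.isBounded hzP hzQ t
    have hcoef : 3 * (diam P + diam Q) ^ 2 ≤
        4 * (1 + 2 * Real.sqrt 2) * (diam P ^ 2 + diam Q ^ 2) := by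
      nlinarith [sq_nonneg (diam P - diam Q), sq_nonneg (diam P + diam Q),
        Real.one_lt_sqrt_two]
    exact lt_irrefl _ (ht.trans_le (hle.trans (div_le_div_of_nonneg_right hcoef (by positivity))))
  · have hsep : 0 < ‖xs - ys‖ := norm_pos_iff.2 <| sub_ne_zero.2 fun h ↦
      eq_empty_iff_forall_notMem.1 hPQ xs ⟨hxs, h ▸ hys⟩
    have hle : ‖xs - ys‖ ^ 2 ≤ ‖x t - y t‖ ^ 2 :=
      pow_le_pow_left₀ hsep.le
        (hmin _ (hALM.mem hPconv hQconv t).1 _ (hALM.mem hPconv hQconv t).2) 2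
    have hpos : (0 : ℝ) < t + 2 := by positivity
    rw [gt_iff_lt, div_lt_iff₀ (by positivity)] at ht
    rw [gt_iff_lt, div_lt_iff₀ hpos]
    linarith [mul_le_mul_of_nonneg_left hle hpos.le]

/-- **Certifying disjointness via Alternating Linear Minimizations** (agnostic steps).
(a) If `‖x_t − y_t‖² > 4(1+2√2)(D_P²+D_Q²)/(t+2)` for some `t`, then `P ∩ Q = ∅`.
(b) Conversely, if `P ∩ Q = ∅`, this inequality holds for every `t` with
`t + 2 > 4(1+2√2)(D_P²+D_Q²)/dist(P,Q)²`. -/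
theorem alm_certify_disjoint
    {G : Type*} [NormedAddCommGroup G] [InnerProductSpace ℝ G]
    (P Q : Set G) (hPne : P.Nonempty) (hQne : Q.Nonempty)
    (hPcpt : IsCompact P) (hQcpt : IsCompact Q)
    (hPconv : Convex ℝ P) (hQconv : Convex ℝ Q)
    (DP DQ : ℝ) (hDP : Metric.diam P = DP) (hDQ : Metric.diam Q = DQ)
    (xs ys : G) (hxs : xs ∈ P) (hys : ys ∈ Q)
    (hmin : ∀ p ∈ P, ∀ q ∈ Q, ‖xs - ys‖ ≤ ‖p - q‖)
    (x y u v : ℕ → G) (hx0 : x 0 ∈ P) (hy0 : y 0 ∈ Q)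
    (humem : ∀ t : ℕ, u t ∈ P)
    (humin : ∀ t : ℕ, ∀ w ∈ P, ⟪x t - y t, u t⟫ ≤ ⟪x t - y t, w⟫)
    (hxupd : ∀ t : ℕ, x (t + 1) = x t + (2 / ((t : ℝ) + 2)) • (u t - x t))
    (hvmem : ∀ t : ℕ, v t ∈ Q)
    (hvmin : ∀ t : ℕ, ∀ w ∈ Q, ⟪y t - x (t + 1), v t⟫ ≤ ⟪y t - x (t + 1), w⟫)
    (hyupd : ∀ t : ℕ, y (t + 1) = y t + (2 / ((t : ℝ) + 2)) • (v t - y t)) :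
    ((∃ t : ℕ, ‖x t - y t‖ ^ 2 >
        4 * (1 + 2 * Real.sqrt 2) * (DP ^ 2 + DQ ^ 2) / ((t : ℝ) + 2)) →
      P ∩ Q = ∅) ∧
    (P ∩ Q = ∅ →
      ∀ t : ℕ,
        (t : ℝ) + 2 > 4 * (1 + 2 * Real.sqrt 2) * (DP ^ 2 + DQ ^ 2) / ‖xs - ys‖ ^ 2 →
        ‖x t - y t‖ ^ 2 >
          4 * (1 + 2 * Real.sqrt 2) * (DP ^ 2 + DQ ^ 2) / ((t : ℝ) + 2)) :=
  alm_certify_disjoint_general P Q hPcpt hQcpt hPconv hQconv DP DQ hDP hDQ xs ys hxs hys hmin x y u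
    v hx0 hy0 humem humin hxupd hvmem hvmin hyupd
end

section
/- Let P and Q be nonempty compact convex sets in a real Hilbert space and let d = x* − y* be the distance vector between P and Q, where x* ∈ P, y* ∈ Q attain ‖x* − y*‖ = dist(P, Q). Then for every x ∈ P and y ∈ Q: ‖x − y − d‖² ≤ ‖x − y‖² − dist(P, Q)². -/
open RealInnerProductSpace
open scoped Pointwise

/-!
The difference set `P - Q` is convex and `d = x* - y*` is its point of least norm, i.e. the
projection of `0` onto it. The variational characterization of that projection gives
`⟪d, (x - y) - d⟫ ≥ 0` for every `x - y ∈ P - Q`, and expanding `‖(x - y - d) + d‖²` turns this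
into the claim.
-/

section

variable {F : Type*} [NormedAddCommGroup F] [InnerProductSpace ℝ F]

theorem Convex.real_inner_sub_nonneg_of_isMinOn_norm {K : Set F} (hK : Convex ℝ K) {v : F}
    (hv : v ∈ K) (hmin : IsMinOn norm K v) : ∀ w ∈ K, 0 ≤ ⟪v, w - v⟫ := by
  have : Nonempty K := ⟨⟨v, hv⟩⟩
  have hinf : ‖0 - v‖ = ⨅ w : K, ‖0 - (w : F)‖ := by
    simp only [zero_sub, norm_neg]
    exact le_antisymm (le_ciInf fun w => hmin w.2)
      (ciInf_le ⟨0, Set.forall_mem_range.2 fun _ => norm_nonneg _⟩ (⟨v, hv⟩ : K))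
  intro w hw
  have := (norm_eq_iInf_iff_real_inner_le_zero hK hv).1 hinf w hw
  rwa [zero_sub, inner_neg_left, neg_nonpos] at this

theorem norm_sq_add_le_norm_add_sq_of_inner_nonneg {u v : F} (h : 0 ≤ ⟪u, v⟫) :
    ‖u‖ ^ 2 + ‖v‖ ^ 2 ≤ ‖u + v‖ ^ 2 := by
  rw [norm_add_sq_real]
  linarith

end

theorem norm_sub_distance_vector_sq_le_general
    {H : Type*} [NormedAddCommGroup H] [InnerProductSpace ℝ H]
    (P Q : Set H)
    (hPconv : Convex ℝ P) (hQconv : Convex ℝ Q)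
    (xstar ystar : H) (hxstar : xstar ∈ P) (hystar : ystar ∈ Q)
    (hmin : ∀ p ∈ P, ∀ q ∈ Q, ‖xstar - ystar‖ ≤ ‖p - q‖) :
    ∀ x ∈ P, ∀ y ∈ Q,
      ‖x - y - (xstar - ystar)‖ ^ 2 ≤ ‖x - y‖ ^ 2 - ‖xstar - ystar‖ ^ 2 := by
  intro x hx y hy
  have hd : xstar - ystar ∈ P - Q := Set.sub_mem_sub hxstar hystar
  have hd_min : IsMinOn norm (P - Q) (xstar - ystar) := by
    rintro _ ⟨p, hp, q, hq, rfl⟩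
    exact hmin p hp q hq
  have hinner := (hPconv.sub hQconv).real_inner_sub_nonneg_of_isMinOn_norm hd hd_min
    (x - y) (Set.sub_mem_sub hx hy)
  rw [real_inner_comm] at hinner
  have := norm_sq_add_le_norm_add_sq_of_inner_nonneg hinner
  rw [sub_add_cancel] at this
  linarith

/-- For compact convex sets `P`, `Q` in a real Hilbert space with distance vector
`d = x* − y*` (where `x* ∈ P`, `y* ∈ Q` attain `dist(P,Q)`), every `x ∈ P`, `y ∈ Q`
satisfy `‖x − y − d‖² ≤ ‖x − y‖² − dist(P,Q)²`. -/
theorem norm_sub_distance_vector_sq_le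
    {H : Type*} [NormedAddCommGroup H] [InnerProductSpace ℝ H] [CompleteSpace H]
    (P Q : Set H) (hPne : P.Nonempty) (hQne : Q.Nonempty)
    (hPcpt : IsCompact P) (hQcpt : IsCompact Q)
    (hPconv : Convex ℝ P) (hQconv : Convex ℝ Q)
    (xstar ystar : H) (hxstar : xstar ∈ P) (hystar : ystar ∈ Q)
    (hmin : ∀ p ∈ P, ∀ q ∈ Q, ‖xstar - ystar‖ ≤ ‖p - q‖) :
    ∀ x ∈ P, ∀ y ∈ Q,
      ‖x - y - (xstar - ystar)‖ ^ 2 ≤ ‖x - y‖ ^ 2 - ‖xstar - ystar‖ ^ 2 :=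
  norm_sub_distance_vector_sq_le_general P Q hPconv hQconv xstar ystar hxstar hystar hmin
end
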